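/- arXiv:math/0410167 — 5 statements merged into one kernel-verified Lean document; each statement's English description precedes it below -/
import Mathlib

section
/- For the inverse Gaussian measure μ(dx) = (p/√(2π)) x^{−3/2} exp(−p²/(2x)) 1_{(0,∞)}(x) dx with p > 0, the Laplace transform domain satisfies Θ(μ) = (−∞, 0) and the cumulant function is k_μ(θ) = −p√(−2θ) for θ < 0. -/
open MeasureTheory Real Set Filter
open scoped NNReal ENNReal


lemma aux_integrable {a b : ℝ} (ha : 0 < a) (hb : 0 < b) {r : ℝ} (hr1 : -2 ≤ r) (hr2 : r ≤ 0) :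
    IntegrableOn (fun x => x ^ r * Real.exp (-(a*x) - b/x)) (Set.Ioi (0:ℝ)) := by
  have hmeas : Measurable (fun x : ℝ => x ^ r * Real.exp (-(a*x) - b/x)) := by
    apply (measurable_id.pow_const _).mul
    exact (((measurable_const.mul measurable_id).neg.sub
      (measurable_const.div measurable_id)).exp)
  have hsplit : Set.Ioi (0:ℝ) = Set.Ioc 0 1 ∪ Set.Ioi 1 := (Set.Ioc_union_Ioi_eq_Ioi (by norm_num)).symm
  rw [hsplit]
  apply IntegrableOn.union
  · -- on Ioc 0 1, bounded by 4/b^2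
    apply Integrable.mono' (integrable_const (4/b^2)) hmeas.aestronglyMeasurable
    rw [ae_restrict_iff' measurableSet_Ioc]
    filter_upwards with x hx
    obtain ⟨hx0, hx1⟩ := hx
    have hsq : (b/x)^2/4 ≤ Real.exp (b/x) := by
      have h0 : 0 ≤ b/x := by positivity
      have := Real.add_one_le_exp (b/x/2)
      have h2 : Real.exp (b/x) = Real.exp (b/x/2)^2 := by
        rw [← Real.exp_nat_mul]; norm_num; ring_nf
      nlinarith [Real.exp_pos (b/x/2)]
    have hexp : Real.exp (-(a*x) - b/x) ≤ 4 * x^2 / b^2 := by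
      rw [Real.exp_sub, div_eq_mul_inv]
      have h1 : Real.exp (-(a*x)) ≤ 1 := Real.exp_le_one_iff.2 (by nlinarith)
      have h2 : (Real.exp (b/x))⁻¹ ≤ 4*x^2/b^2 := by
        rw [inv_le_iff_one_le_mul₀ (Real.exp_pos _)]
        have : (b/x)^2/4 * (4*x^2/b^2) = 1 := by field_simp
        calc (1:ℝ) = (b/x)^2/4 * (4*x^2/b^2) := this.symm
          _ ≤ Real.exp (b/x) * (4*x^2/b^2) := by
              apply mul_le_mul_of_nonneg_right hsq (by positivity)
          _ = 4*x^2/b^2 * Real.exp (b/x) := by ring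
      calc Real.exp (-(a*x)) * (Real.exp (b/x))⁻¹ ≤ 1 * (4*x^2/b^2) := by
            apply mul_le_mul h1 h2 (by positivity) (by norm_num)
        _ = 4*x^2/b^2 := one_mul _
    have hpow : x ^ r * x^2 ≤ 1 := by
      have : x ^ r * x^2 = x ^ (r+2) := by
        rw [← Real.rpow_two, ← Real.rpow_add hx0]
      rw [this]
      exact Real.rpow_le_one hx0.le hx1 (by linarith)
    have hxr : 0 ≤ x ^ r := Real.rpow_nonneg hx0.le r
    rw [Real.norm_eq_abs, abs_of_nonneg (by positivity)]
    calc x ^ r * Real.exp (-(a*x) - b/x) ≤ x ^ r * (4*x^2/b^2) := by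
          apply mul_le_mul_of_nonneg_left hexp hxr
      _ = (x ^ r * x^2) * (4/b^2) := by ring
      _ ≤ 1 * (4/b^2) := by apply mul_le_mul_of_nonneg_right hpow (by positivity)
      _ = 4/b^2 := one_mul _
  · -- on Ioi 1, bounded by exp(-a x)
    apply Integrable.mono' (exp_neg_integrableOn_Ioi 1 ha) hmeas.aestronglyMeasurable
    rw [ae_restrict_iff' measurableSet_Ioi]
    filter_upwards with x hx
    have hx1 : (1:ℝ) < x := hx
    have hx0 : (0:ℝ) < x := by linarith
    rw [Real.norm_eq_abs, abs_of_nonneg (by positivity)]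
    have h1 : x ^ r ≤ 1 := Real.rpow_le_one_of_one_le_of_nonpos hx1.le hr2
    have h2 : Real.exp (-(a*x) - b/x) ≤ Real.exp (-a*x) := by
      apply Real.exp_le_exp.2
      have : 0 < b/x := by positivity
      nlinarith
    calc x ^ r * Real.exp (-(a*x) - b/x) ≤ 1 * Real.exp (-a*x) :=
        mul_le_mul h1 h2 (Real.exp_pos _).le (by norm_num)
      _ = Real.exp (-a*x) := one_mul _


lemma aux_refl {a b : ℝ} (ha : 0 < a) (hb : 0 < b) :
    ∫ x in Set.Ioi (0:ℝ), x ^ (-(1:ℝ)/2) * Real.exp (-(a*x) - b/x)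
      = (Real.sqrt b / Real.sqrt a) *
        ∫ x in Set.Ioi (0:ℝ), x ^ (-(3:ℝ)/2) * Real.exp (-(a*x) - b/x) := by
  have himg : (fun x => b/(a*x)) '' Set.Ioi (0:ℝ) = Set.Ioi 0 := by
    apply Set.eq_of_subset_of_subset
    · rintro y ⟨x, hx, rfl⟩
      exact by simp only [Set.mem_Ioi] at hx ⊢; positivity
    · intro y hy
      simp only [Set.mem_Ioi] at hy
      exact ⟨b/(a*y), by simp only [Set.mem_Ioi]; positivity, by field_simp⟩
  have hderiv : ∀ x ∈ Set.Ioi (0:ℝ), HasDerivWithinAt (fun x => b/(a*x))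
      (-(b/a) / x^2) (Set.Ioi 0) x := by
    intro x hx
    simp only [Set.mem_Ioi] at hx
    have h1 : HasDerivAt (fun x : ℝ => a * x) a x := by
      simpa using (hasDerivAt_id x).const_mul a
    have h2 := (h1.inv (by positivity : a * x ≠ 0)).const_mul b
    have heq : (fun x : ℝ => b * (a*x)⁻¹) = (fun x : ℝ => b/(a*x)) := by
      funext t; rw [div_eq_mul_inv]
    replace h2 : HasDerivAt (fun x : ℝ => b * (a*x)⁻¹) (b * (-a / (a * x) ^ 2)) x := h2
    rw [heq] at h2
    refine HasDerivAt.hasDerivWithinAt ?_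
    refine h2.congr_deriv ?_
    field_simp
  have hinj : Set.InjOn (fun x => b/(a*x)) (Set.Ioi (0:ℝ)) := by
    intro x hx y hy hxy
    simp only [Set.mem_Ioi] at hx hy
    field_simp at hxy
    rcases hxy with (h | h) | h
    · rfl
  have := MeasureTheory.integral_image_eq_integral_abs_deriv_smul measurableSet_Ioi hderiv hinj
    (fun x => x ^ (-(1:ℝ)/2) * Real.exp (-(a*x) - b/x))
  rw [himg] at this
  rw [this, ← smul_eq_mul, ← integral_smul]
  apply setIntegral_congr_fun measurableSet_Ioi
  intro x hx
  simp only [Set.mem_Ioi] at hx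
  have hax : 0 < a * x := by positivity
  have hbax : 0 < b / (a*x) := by positivity
  simp only [smul_eq_mul]
  have h1 : |(-(b/a) / x^2)| = b/a/x^2 := by
    rw [abs_of_nonpos (by rw [neg_div]; exact neg_nonpos.2 (by positivity))]; ring
  have harg : -(a * (b/(a*x))) - b/(b/(a*x)) = -(a*x) - b/x := by
    field_simp; ring
  have hrw1 : (b/(a*x)) ^ (-(1:ℝ)/2) = Real.sqrt (a*x) / Real.sqrt b := by
    rw [show (-(1:ℝ)/2) = -(1/2) by norm_num, Real.rpow_neg hbax.le,
      ← Real.sqrt_eq_rpow, Real.sqrt_div hb.le, inv_div]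
  have hrw2 : x ^ (-(3:ℝ)/2) = Real.sqrt x / x^2 := by
    rw [show (-(3:ℝ)/2) = 1/2 + (-2:ℝ) by norm_num, Real.rpow_add hx,
      ← Real.sqrt_eq_rpow, Real.rpow_neg hx.le,
      show ((2:ℝ)) = ((2:ℕ):ℝ) by norm_num, Real.rpow_natCast, div_eq_mul_inv]
  rw [h1, harg, hrw1, hrw2, Real.sqrt_mul ha.le]
  have hsx : Real.sqrt x ^ 2 = x := Real.sq_sqrt hx.le
  have hsa : Real.sqrt a ^ 2 = a := Real.sq_sqrt ha.le
  have hsb : Real.sqrt b ^ 2 = b := Real.sq_sqrt hb.le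
  have hsxp : 0 < Real.sqrt x := Real.sqrt_pos.2 hx
  have hsap : 0 < Real.sqrt a := Real.sqrt_pos.2 ha
  have hsbp : 0 < Real.sqrt b := Real.sqrt_pos.2 hb
  field_simp
  linear_combination b * hsa - a * hsb


lemma aux_value {a b : ℝ} (ha : 0 < a) (hb : 0 < b) :
    ∫ x in Set.Ioi (0:ℝ), x ^ (-(3:ℝ)/2) * Real.exp (-(a*x) - b/x)
      = Real.sqrt π / Real.sqrt b * Real.exp (-(2 * Real.sqrt a * Real.sqrt b)) := by
  have refl_eq := aux_refl ha hb
  have int1 : IntegrableOn (fun x => x ^ (-(1:ℝ)/2) * Real.exp (-(a*x) - b/x)) (Set.Ioi (0:ℝ)) :=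
    aux_integrable ha hb (by norm_num) (by norm_num)
  have int3 : IntegrableOn (fun x => x ^ (-(3:ℝ)/2) * Real.exp (-(a*x) - b/x)) (Set.Ioi (0:ℝ)) :=
    aux_integrable ha hb (by norm_num) (by norm_num)
  set sa := Real.sqrt a with hsa_def
  set sb := Real.sqrt b with hsb_def
  have hsa : sa^2 = a := Real.sq_sqrt ha.le
  have hsb : sb^2 = b := Real.sq_sqrt hb.le
  have hsap : 0 < sa := Real.sqrt_pos.2 ha
  have hsbp : 0 < sb := Real.sqrt_pos.2 hb
  set φ : ℝ → ℝ := fun x => sa * Real.sqrt x - sb / Real.sqrt x with hφ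
  set φ' : ℝ → ℝ := fun x => sa / (2 * Real.sqrt x) + sb / (2 * x * Real.sqrt x) with hφ'
  have hderiv : ∀ x ∈ Set.Ioi (0:ℝ), HasDerivWithinAt φ (φ' x) (Set.Ioi 0) x := by
    intro x hx
    simp only [Set.mem_Ioi] at hx
    have hsx : Real.sqrt x ^ 2 = x := Real.sq_sqrt hx.le
    have hsxp : 0 < Real.sqrt x := Real.sqrt_pos.2 hx
    have hs : HasDerivAt Real.sqrt (1/(2*Real.sqrt x)) x := Real.hasDerivAt_sqrt hx.ne'
    have h1 := hs.const_mul sa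
    have h2 := (hs.inv hsxp.ne').const_mul sb
    have h3 := h1.sub h2
    refine HasDerivAt.hasDerivWithinAt ?_
    have heq : (fun y => sa * Real.sqrt y - sb * (Real.sqrt y)⁻¹) = φ := by
      funext y; simp only [hφ, div_eq_mul_inv]
    replace h3 : HasDerivAt (fun y => sa * Real.sqrt y - sb * (Real.sqrt y)⁻¹)
      (sa * (1 / (2 * Real.sqrt x)) - sb * (-(1 / (2 * Real.sqrt x)) / Real.sqrt x ^ 2)) x := h3
    rw [heq] at h3
    refine h3.congr_deriv ?_
    simp only [hφ']
    field_simp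
    ring_nf
    linear_combination (-sb) * hsx
  have hmono : StrictMonoOn φ (Set.Ioi (0:ℝ)) := by
    intro x hx y hy hxy
    simp only [Set.mem_Ioi] at hx hy
    have hsx : Real.sqrt x < Real.sqrt y := Real.sqrt_lt_sqrt hx.le hxy
    have hsxp : 0 < Real.sqrt x := Real.sqrt_pos.2 hx
    have h4 : sb/Real.sqrt y < sb/Real.sqrt x := by
      apply div_lt_div_of_pos_left hsbp hsxp hsx
    have h5 : sa * Real.sqrt x < sa * Real.sqrt y := by
      exact mul_lt_mul_of_pos_left hsx hsap
    simp only [hφ]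
    linarith
  have himg : φ '' Set.Ioi (0:ℝ) = Set.univ := by
    apply Set.eq_univ_of_forall
    intro u
    set D := Real.sqrt (u^2 + 4*sa*sb) with hD
    have hD2 : D^2 = u^2 + 4*sa*sb := Real.sq_sqrt (by nlinarith)
    have hDu : -u < D := by
      have h1 : |u| ≤ D := by
        rw [hD, ← Real.sqrt_sq_eq_abs]
        apply Real.sqrt_le_sqrt; nlinarith
      cases abs_cases u with
      | inl h => nlinarith [abs_nonneg u]
      | inr h => nlinarith
    set t := (u + D)/(2*sa) with ht
    have htp : 0 < t := by
      apply div_pos (by linarith) (by linarith)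
    refine ⟨t^2, by simp only [Set.mem_Ioi]; positivity, ?_⟩
    have hkey : sa * t^2 - u*t - sb = 0 := by
      rw [ht]; field_simp; nlinarith [hD2]
    simp only [hφ]
    rw [Real.sqrt_sq htp.le]
    field_simp
    linarith [hkey]
  have key := MeasureTheory.integral_image_eq_integral_abs_deriv_smul measurableSet_Ioi
    hderiv (hmono.injOn) (fun u => Real.exp (-u^2))
  rw [himg, MeasureTheory.setIntegral_univ] at key
  have hgauss : ∫ u : ℝ, Real.exp (-u^2) = Real.sqrt π := by
    have := integral_gaussian 1
    simpa using this
  rw [hgauss] at key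
  -- rewrite the RHS integrand
  set c : ℝ := Real.exp (2*sa*sb) with hc
  have hre : ∫ x in Set.Ioi (0:ℝ), |φ' x| • Real.exp (-(φ x)^2)
      = ∫ x in Set.Ioi (0:ℝ), ((c * (sa/2)) * (x ^ (-(1:ℝ)/2) * Real.exp (-(a*x) - b/x))
        + (c * (sb/2)) * (x ^ (-(3:ℝ)/2) * Real.exp (-(a*x) - b/x))) := by
    apply setIntegral_congr_fun measurableSet_Ioi
    intro x hx
    simp only [Set.mem_Ioi] at hx
    have hsx : Real.sqrt x ^ 2 = x := Real.sq_sqrt hx.le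
    have hsxp : 0 < Real.sqrt x := Real.sqrt_pos.2 hx
    have hφ'pos : 0 < φ' x := by
      simp only [hφ']; positivity
    simp only [abs_of_pos hφ'pos, smul_eq_mul]
    have hsq : -(φ x)^2 = 2*sa*sb + (-(a*x) - b/x) := by
      simp only [hφ]
      field_simp
      linear_combination (b - x*a*Real.sqrt x^2) * hsx - x*Real.sqrt x^4 * hsa - x * hsb
    rw [hsq, Real.exp_add, ← hc]
    have hrw1 : x ^ (-(1:ℝ)/2) = (Real.sqrt x)⁻¹ := by
      rw [show (-(1:ℝ)/2) = -(1/2) by norm_num, Real.rpow_neg hx.le, ← Real.sqrt_eq_rpow]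
    have hrw2 : x ^ (-(3:ℝ)/2) = Real.sqrt x / x^2 := by
      rw [show (-(3:ℝ)/2) = 1/2 + (-2:ℝ) by norm_num, Real.rpow_add hx,
        ← Real.sqrt_eq_rpow, Real.rpow_neg hx.le,
        show ((2:ℝ)) = ((2:ℕ):ℝ) by norm_num, Real.rpow_natCast, div_eq_mul_inv]
    rw [hrw1, hrw2]
    simp only [hφ']
    field_simp
    ring_nf
    linear_combination (-(sb*c)) * hsx
  rw [hre] at key
  rw [MeasureTheory.integral_add ((int1.const_mul _)) ((int3.const_mul _)),
    MeasureTheory.integral_const_mul, MeasureTheory.integral_const_mul, refl_eq] at key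
  have hcinv : Real.exp (-(2*sa*sb)) = c⁻¹ := by
    rw [hc, ← Real.exp_neg]
  have hcpos : 0 < c := Real.exp_pos _
  set I := ∫ x in Set.Ioi (0:ℝ), x ^ (-(3:ℝ)/2) * Real.exp (-(a*x) - b/x) with hI
  have key2 : Real.sqrt π = c * sb * I := by
    rw [key]; field_simp; ring
  rw [hcinv, key2]
  field_simp

section Main

variable (p : ℝ)

/-- The inverse Gaussian measure with parameters 1/2 and `p > 0`. -/
noncomputable def invGaussian (p : ℝ) : Measure ℝ :=
  MeasureTheory.volume.withDensity (fun x => ENNReal.ofReal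
    (if 0 < x then p / Real.sqrt (2 * Real.pi) * x ^ (-(3:ℝ)/2) *
      Real.exp (-p ^ 2 / (2 * x)) else 0))

noncomputable def D (p : ℝ) : ℝ → ℝ := fun x =>
  if 0 < x then p / Real.sqrt (2 * Real.pi) * x ^ (-(3:ℝ)/2) *
      Real.exp (-p ^ 2 / (2 * x)) else 0

lemma invGaussian_eq : invGaussian p = MeasureTheory.volume.withDensity
    (fun x => ENNReal.ofReal (D p x)) := rfl

lemma D_meas : Measurable (D p) := by
  apply Measurable.ite (measurableSet_lt measurable_const measurable_id)
  · exact ((measurable_const.mul (measurable_id.pow_const _)).mul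
      ((measurable_const.div (measurable_const.mul measurable_id)).exp))
  · exact measurable_const

lemma D_nonneg (hp : 0 < p) : ∀ x, 0 ≤ D p x := by
  intro x
  unfold D
  split_ifs with h
  · have : (0:ℝ) < π := Real.pi_pos
    positivity
  · exact le_refl 0

lemma integrable_iff (hp : 0 < p) (θ : ℝ) :
    Integrable (fun x => Real.exp (θ * x)) (invGaussian p) ↔
      Integrable (fun x => Real.exp (θ * x) * D p x) volume := by
  rw [invGaussian_eq, integrable_withDensity_iff ((D_meas p).ennreal_ofReal)
    (Filter.Eventually.of_forall fun x => ENNReal.ofReal_lt_top)]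
  have : (fun x => Real.exp (θ*x) * (ENNReal.ofReal (D p x)).toReal)
      = fun x => Real.exp (θ*x) * D p x := by
    funext x; rw [ENNReal.toReal_ofReal (D_nonneg p hp x)]
  rw [this]

lemma hind (θ : ℝ) : (fun x => Real.exp (θ * x) * D p x)
    = Set.indicator (Set.Ioi 0) (fun x => Real.exp (θ*x) *
        (p / Real.sqrt (2 * Real.pi) * x ^ (-(3:ℝ)/2) * Real.exp (-p ^ 2 / (2 * x)))) := by
  funext x
  by_cases h : 0 < x
  · rw [Set.indicator_of_mem (by exact h : x ∈ Set.Ioi 0)]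
    unfold D; rw [if_pos h]
  · rw [Set.indicator_of_notMem (by exact h : x ∉ Set.Ioi 0)]
    unfold D; rw [if_neg h, mul_zero]

lemma ptwise (hp : 0 < p) {θ : ℝ} (hθ : θ < 0) : ∀ x ∈ Set.Ioi (0:ℝ),
    Real.exp (θ*x) * (p / Real.sqrt (2 * Real.pi) * x ^ (-(3:ℝ)/2) * Real.exp (-p ^ 2 / (2 * x)))
      = (p / Real.sqrt (2 * Real.pi)) *
        (x ^ (-(3:ℝ)/2) * Real.exp (-((-θ)*x) - (p^2/2)/x)) := by
  intro x hx
  simp only [Set.mem_Ioi] at hx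
  have harg : -((-θ)*x) - (p^2/2)/x = θ*x + -p^2/(2*x) := by
    field_simp; ring
  rw [harg, Real.exp_add]
  ring

lemma integrableOn_neg (hp : 0 < p) {θ : ℝ} (hθ : θ < 0) :
    IntegrableOn (fun x => Real.exp (θ*x) *
      (p / Real.sqrt (2 * Real.pi) * x ^ (-(3:ℝ)/2) * Real.exp (-p ^ 2 / (2 * x))))
      (Set.Ioi (0:ℝ)) := by
  have ha : 0 < -θ := by linarith
  have hb : 0 < p^2/2 := by positivity
  have base := (aux_integrable (r := -(3:ℝ)/2) ha hb (by norm_num) (by norm_num)).const_mul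
    (p / Real.sqrt (2 * Real.pi))
  exact MeasureTheory.IntegrableOn.congr_fun base (fun x hx => (ptwise p hp hθ x hx).symm) measurableSet_Ioi

lemma integral_value (hp : 0 < p) {θ : ℝ} (hθ : θ < 0) :
    ∫ x, Real.exp (θ * x) ∂(invGaussian p) = Real.exp (-(p * Real.sqrt (-2*θ))) := by
  have ha : 0 < -θ := by linarith
  have hb : 0 < p^2/2 := by positivity
  rw [invGaussian_eq]
  have hcoe : (fun x => ENNReal.ofReal (D p x))
      = (fun x => ((Real.toNNReal (D p x) : ℝ≥0) : ℝ≥0∞)) := rfl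
  rw [hcoe, integral_withDensity_eq_integral_smul
    ((D_meas p).real_toNNReal) (fun x => Real.exp (θ * x))]
  have hsm : (fun x => Real.toNNReal (D p x) • Real.exp (θ * x))
      = fun x => Real.exp (θ * x) * D p x := by
    funext x
    rw [NNReal.smul_def, smul_eq_mul, Real.coe_toNNReal _ (D_nonneg p hp x), mul_comm]
  rw [hsm, hind p θ, MeasureTheory.integral_indicator measurableSet_Ioi]
  rw [MeasureTheory.setIntegral_congr_fun measurableSet_Ioi (ptwise p hp hθ)]
  rw [MeasureTheory.integral_const_mul, aux_value ha hb]
  -- arithmetic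
  have hπ : (0:ℝ) < π := Real.pi_pos
  have h2π : Real.sqrt (2*π) = Real.sqrt 2 * Real.sqrt π := Real.sqrt_mul (by norm_num) π
  have hb' : Real.sqrt (p^2/2) = p / Real.sqrt 2 := by
    rw [Real.sqrt_div (sq_nonneg p), Real.sqrt_sq hp.le]
  have hs2 : Real.sqrt 2 ^ 2 = 2 := Real.sq_sqrt (by norm_num)
  have hs2p : 0 < Real.sqrt 2 := Real.sqrt_pos.2 (by norm_num)
  have hsπp : 0 < Real.sqrt π := Real.sqrt_pos.2 hπ
  have hexparg : 2 * Real.sqrt (-θ) * (p / Real.sqrt 2) = p * Real.sqrt (-2*θ) := by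
    rw [show (-2*θ) = 2*(-θ) by ring, Real.sqrt_mul (by norm_num)]
    field_simp
    linear_combination (-1:ℝ) * hs2
  rw [h2π, hb', hexparg]
  have hfac : p / (Real.sqrt 2 * Real.sqrt π) * (Real.sqrt π / (p / Real.sqrt 2)) = 1 := by
    field_simp
  rw [← mul_assoc, hfac, one_mul]

lemma not_integrable_pos (hp : 0 < p) {θ : ℝ} (hθ : 0 < θ) :
    ¬ Integrable (fun x => Real.exp (θ * x)) (invGaussian p) := by
  intro hInt
  rw [integrable_iff p hp θ] at hInt
  have hπ : (0:ℝ) < π := Real.pi_pos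
  set C : ℝ := p / Real.sqrt (2*π) with hC
  have hCpos : 0 < C := by positivity
  set c : ℝ := (θ/4)^4 * C * Real.exp (-p^2/2) with hc
  have hcpos : 0 < c := by positivity
  set M : ℝ := max 1 c⁻¹ with hM
  have hbound : ∀ x ∈ Set.Ici M, 1 ≤ Real.exp (θ * x) * D p x := by
    intro x hx
    simp only [Set.mem_Ici] at hx
    have hx1 : (1:ℝ) ≤ x := le_trans (le_max_left _ _) hx
    have hxc : c⁻¹ ≤ x := le_trans (le_max_right _ _) hx
    have hx0 : (0:ℝ) < x := by linarith
    have hD : D p x = C * x ^ (-(3:ℝ)/2) * Real.exp (-p^2/(2*x)) := by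
      unfold D; rw [if_pos hx0]
    rw [hD]
    have h1 : (θ*x/4)^4 ≤ Real.exp (θ*x) := by
      have he : Real.exp (θ*x) = Real.exp (θ*x/4)^4 := by
        rw [← Real.exp_nat_mul]; congr 1; push_cast; ring
      have h14 : θ*x/4 ≤ Real.exp (θ*x/4) := by
        have := Real.add_one_le_exp (θ*x/4); linarith
      rw [he]
      exact pow_le_pow_left₀ (by positivity) h14 4
    have h2 : x ^ (-(2:ℝ)) ≤ x ^ (-(3:ℝ)/2) :=
      Real.rpow_le_rpow_of_exponent_le hx1 (by norm_num)
    have h2' : x ^ (-(2:ℝ)) = (x^2)⁻¹ := by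
      rw [Real.rpow_neg hx0.le, show ((2:ℝ)) = ((2:ℕ):ℝ) by norm_num, Real.rpow_natCast]
    have h3 : Real.exp (-p^2/2) ≤ Real.exp (-p^2/(2*x)) := by
      apply Real.exp_le_exp.2
      rw [div_le_div_iff₀ (by norm_num) (by positivity)]
      nlinarith
    calc (1:ℝ) = c * c⁻¹ := (mul_inv_cancel₀ hcpos.ne').symm
      _ ≤ c * x := by
          apply mul_le_mul_of_nonneg_left hxc hcpos.le
      _ ≤ c * x^2 := by
          apply mul_le_mul_of_nonneg_left _ hcpos.le
          nlinarith
      _ = (θ*x/4)^4 * (C * (x^2)⁻¹ * Real.exp (-p^2/2)) := by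
          rw [hc]; field_simp
      _ = (θ*x/4)^4 * (C * x ^ (-(2:ℝ)) * Real.exp (-p^2/2)) := by rw [h2']
      _ ≤ Real.exp (θ*x) * (C * x ^ (-(3:ℝ)/2) * Real.exp (-p^2/(2*x))) := by
          apply mul_le_mul h1 _ (by positivity) (Real.exp_pos _).le
          apply mul_le_mul _ h3 (Real.exp_pos _).le (by positivity)
          exact mul_le_mul_of_nonneg_left h2 hCpos.le
  have hone : Integrable (fun _ : ℝ => (1:ℝ)) (volume.restrict (Set.Ici M)) := by
    apply MeasureTheory.Integrable.mono hInt.integrableOn aestronglyMeasurable_const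
    rw [ae_restrict_iff' measurableSet_Ici]
    filter_upwards with x hx
    have h1 := hbound x hx
    rw [norm_one, Real.norm_eq_abs, abs_of_nonneg (by linarith)]
    exact h1
  rw [MeasureTheory.integrable_const_iff] at hone
  rcases hone with h | h
  · norm_num at h
  · have h := h.measure_univ_lt_top
    rw [MeasureTheory.Measure.restrict_apply_univ, Real.volume_Ici] at h
    exact (lt_irrefl _ h)

/-- For the inverse Gaussian measure, the interior of the Laplace-transform domain is
`(−∞, 0)` and the cumulant function is `k_μ(θ) = −p √(−2θ)` for `θ < 0`. -/
theorem invGaussian_laplaceDomain_and_cumulant (p : ℝ) (hp : 0 < p) :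
    interior {θ : ℝ | Integrable (fun x => Real.exp (θ * x)) (invGaussian p)}
      = Set.Iio (0 : ℝ)
    ∧ ∀ θ : ℝ, θ < 0 →
      Real.log (∫ x, Real.exp (θ * x) ∂(invGaussian p))
        = -p * Real.sqrt (-2 * θ) := by
  constructor
  · have hsub1 : Set.Iio (0:ℝ) ⊆ {θ : ℝ | Integrable (fun x => Real.exp (θ * x)) (invGaussian p)} := by
      intro θ hθ
      simp only [Set.mem_Iio] at hθ
      simp only [Set.mem_setOf_eq]
      rw [integrable_iff p hp θ, hind p θ, MeasureTheory.integrable_indicator_iff measurableSet_Ioi]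
      exact integrableOn_neg p hp hθ
    have hsub2 : {θ : ℝ | Integrable (fun x => Real.exp (θ * x)) (invGaussian p)} ⊆ Set.Iic 0 := by
      intro θ hθ
      simp only [Set.mem_setOf_eq] at hθ
      by_contra h
      simp only [Set.mem_Iic, not_le] at h
      exact not_integrable_pos p hp h hθ
    apply subset_antisymm
    · calc interior {θ : ℝ | Integrable (fun x => Real.exp (θ * x)) (invGaussian p)}
          ⊆ interior (Set.Iic 0) := interior_mono hsub2
        _ = Set.Iio 0 := interior_Iic
    · exact interior_maximal hsub1 isOpen_Iio
  · intro θ hθ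
    rw [integral_value p hp hθ, Real.log_exp]
    ring

end Main
end

section
/- With μ = P(m_0, F) a probability in the NEF F with mean m_0 and P_n(x) = ∂ⁿ/∂mⁿ f_μ(x,m)|_{m=m_0}, one has ∫ P_n(x) dμ(x) = 0 for every n ≥ 1. -/
open MeasureTheory Real Filter Topology

open scoped ContDiff

/-- The effective domain of the Laplace transform. -/
def laplaceDomain (μ : Measure ℝ) : Set ℝ :=
  {θ : ℝ | Integrable (fun x => Real.exp (θ * x)) μ}

/-- The cumulant function. -/
noncomputable def cumulant (μ : Measure ℝ) (θ : ℝ) : ℝ :=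
  Real.log (∫ x, Real.exp (θ * x) ∂μ)

/-- The density of the mean-`m` member of the NEF with respect to the basis `μ`. -/
noncomputable def nefDensity (μ : Measure ℝ) (ψ : ℝ → ℝ) (x m : ℝ) : ℝ :=
  Real.exp (ψ m * x - cumulant μ (ψ m))

private lemma exp_le_exp_add_exp {tlo thi t x : ℝ} (h1 : tlo ≤ t) (h2 : t ≤ thi) :
    Real.exp (t * x) ≤ Real.exp (tlo * x) + Real.exp (thi * x) := by
  rcases le_or_gt 0 x with hx | hx
  · have h : t * x ≤ thi * x := mul_le_mul_of_nonneg_right h2 hx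
    have h' := Real.exp_le_exp.mpr h
    nlinarith [Real.exp_pos (tlo * x)]
  · have h : t * x ≤ tlo * x := mul_le_mul_of_nonpos_right h1 hx.le
    have h' := Real.exp_le_exp.mpr h
    nlinarith [Real.exp_pos (thi * x)]

private lemma integrable_abs_pow_exp (μ : Measure ℝ) {θ : ℝ}
    (hθ : θ ∈ interior (laplaceDomain μ)) (n : ℕ) :
    Integrable (fun x => |x| ^ n * Real.exp (θ * x)) μ := by
  obtain ⟨ε, hε, hball⟩ := Metric.mem_nhds_iff.mp (mem_interior_iff_mem_nhds.mp hθ)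
  set δ := ε / 2 with hδdef
  have hδ : 0 < δ := by positivity
  have hmem : ∀ t : ℝ, |t - θ| ≤ δ → t ∈ laplaceDomain μ := fun t ht =>
    hball (by rw [Metric.mem_ball, Real.dist_eq]; linarith)
  have hIp : Integrable (fun x => Real.exp ((θ + δ) * x)) μ := by
    have h := hmem (θ + δ) (by rw [show θ + δ - θ = δ by ring, abs_of_nonneg hδ.le])
    exact h
  have hIm : Integrable (fun x => Real.exp ((θ - δ) * x)) μ := by
    have h := hmem (θ - δ) (by rw [show θ - δ - θ = -δ by ring, abs_neg, abs_of_nonneg hδ.le])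
    exact h
  have key : ∀ x : ℝ, |x| ^ n * Real.exp (θ * x)
      ≤ ((n.factorial : ℝ) / δ ^ n) * (Real.exp ((θ - δ) * x) + Real.exp ((θ + δ) * x)) := by
    intro x
    have h1 : (δ * |x|) ^ n / (n.factorial : ℝ) ≤ Real.exp (δ * |x|) := by
      calc (δ * |x|) ^ n / (n.factorial : ℝ)
          ≤ ∑ i ∈ Finset.range (n + 1), (δ * |x|) ^ i / (i.factorial : ℝ) :=
            Finset.single_le_sum (f := fun i => (δ * |x|) ^ i / (i.factorial : ℝ))
              (fun i _ => by positivity) (Finset.self_mem_range_succ n)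
        _ ≤ Real.exp (δ * |x|) := Real.sum_le_exp_of_nonneg (by positivity) _
    have h2 : |x| ^ n ≤ ((n.factorial : ℝ) / δ ^ n) * Real.exp (δ * |x|) := by
      have hfac : (0:ℝ) < (n.factorial : ℝ) := by positivity
      have h1' : (δ * |x|) ^ n ≤ Real.exp (δ * |x|) * (n.factorial : ℝ) :=
        (div_le_iff₀ hfac).mp h1
      rw [div_mul_eq_mul_div, le_div_iff₀ (by positivity : (0:ℝ) < δ ^ n)]
      calc |x| ^ n * δ ^ n = (δ * |x|) ^ n := by rw [mul_pow]; ring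
        _ ≤ Real.exp (δ * |x|) * (n.factorial : ℝ) := h1'
        _ = (n.factorial : ℝ) * Real.exp (δ * |x|) := by ring
    have h3 : Real.exp (δ * |x|) * Real.exp (θ * x)
        ≤ Real.exp ((θ - δ) * x) + Real.exp ((θ + δ) * x) := by
      rw [← Real.exp_add]
      rcases le_or_gt 0 x with hx | hx
      · rw [abs_of_nonneg hx, show δ * x + θ * x = (θ + δ) * x by ring]
        exact le_add_of_nonneg_left (Real.exp_pos _).le
      · rw [abs_of_neg hx, show δ * -x + θ * x = (θ - δ) * x by ring]
        exact le_add_of_nonneg_right (Real.exp_pos _).le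
    calc |x| ^ n * Real.exp (θ * x)
        ≤ (((n.factorial : ℝ) / δ ^ n) * Real.exp (δ * |x|)) * Real.exp (θ * x) :=
          mul_le_mul_of_nonneg_right h2 (Real.exp_pos _).le
      _ = ((n.factorial : ℝ) / δ ^ n) * (Real.exp (δ * |x|) * Real.exp (θ * x)) := by ring
      _ ≤ ((n.factorial : ℝ) / δ ^ n) * (Real.exp ((θ - δ) * x) + Real.exp ((θ + δ) * x)) :=
          mul_le_mul_of_nonneg_left h3 (by positivity)
  refine ((hIm.add hIp).const_mul ((n.factorial : ℝ) / δ ^ n)).mono'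
    (Continuous.aestronglyMeasurable (by fun_prop)) (Filter.Eventually.of_forall fun x => ?_)
  rw [Real.norm_eq_abs, abs_of_nonneg (by positivity)]
  exact key x

private lemma integrable_pow_exp (μ : Measure ℝ) {θ : ℝ}
    (hθ : θ ∈ interior (laplaceDomain μ)) (n : ℕ) :
    Integrable (fun x => x ^ n * Real.exp (θ * x)) μ := by
  refine (integrable_abs_pow_exp μ hθ n).mono'
    (Continuous.aestronglyMeasurable (by fun_prop)) (Filter.Eventually.of_forall fun x => ?_)
  rw [Real.norm_eq_abs, abs_mul, abs_pow, abs_of_nonneg (Real.exp_pos _).le]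

private noncomputable def Lfun (μ : Measure ℝ) (k : ℕ) (θ : ℝ) : ℝ :=
  ∫ x, x ^ k * Real.exp (θ * x) ∂μ

private lemma hasDerivAt_Lfun (μ : Measure ℝ) (k : ℕ) {θ : ℝ}
    (hθ : θ ∈ interior (laplaceDomain μ)) :
    HasDerivAt (Lfun μ k) (Lfun μ (k + 1) θ) θ := by
  obtain ⟨ε, hε, hball⟩ := Metric.isOpen_iff.mp isOpen_interior θ hθ
  set δ := ε / 2 with hδdef
  have hδ : 0 < δ := by positivity
  have hmemI : ∀ t : ℝ, |t - θ| ≤ δ → t ∈ interior (laplaceDomain μ) := fun t ht =>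
    hball (by rw [Metric.mem_ball, Real.dist_eq]; linarith)
  have hlo : θ - δ ∈ interior (laplaceDomain μ) :=
    hmemI _ (by rw [show θ - δ - θ = -δ by ring, abs_neg, abs_of_nonneg hδ.le])
  have hhi : θ + δ ∈ interior (laplaceDomain μ) :=
    hmemI _ (by rw [show θ + δ - θ = δ by ring, abs_of_nonneg hδ.le])
  have := hasDerivAt_integral_of_dominated_loc_of_deriv_le (μ := μ) (x₀ := θ) (s := Metric.ball θ δ)
    (F := fun θ' x => x ^ k * Real.exp (θ' * x))
    (F' := fun θ' x => x ^ (k + 1) * Real.exp (θ' * x))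
    (bound := fun x => |x| ^ (k + 1) * Real.exp ((θ - δ) * x)
      + |x| ^ (k + 1) * Real.exp ((θ + δ) * x)) (Metric.ball_mem_nhds θ hδ)
    (Filter.Eventually.of_forall fun θ' =>
      Continuous.aestronglyMeasurable (by fun_prop))
    (integrable_pow_exp μ hθ k)
    (Continuous.aestronglyMeasurable (by fun_prop))
    (Filter.Eventually.of_forall fun x => ?_)
    ((integrable_abs_pow_exp μ hlo (k + 1)).add (integrable_abs_pow_exp μ hhi (k + 1)))
    (Filter.Eventually.of_forall fun x => ?_)
  · exact this.2
  · intro θ' hθ'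
    have hd : |θ' - θ| < δ := by rw [Metric.mem_ball, Real.dist_eq] at hθ'; exact hθ'
    have h1 : θ - δ ≤ θ' := by have := abs_lt.mp hd; linarith [this.1]
    have h2 : θ' ≤ θ + δ := by have := abs_lt.mp hd; linarith [this.2]
    calc ‖x ^ (k + 1) * Real.exp (θ' * x)‖
        = |x| ^ (k + 1) * Real.exp (θ' * x) := by
          rw [Real.norm_eq_abs, abs_mul, abs_pow, abs_of_nonneg (Real.exp_pos _).le]
      _ ≤ |x| ^ (k + 1) * (Real.exp ((θ - δ) * x) + Real.exp ((θ + δ) * x)) :=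
          mul_le_mul_of_nonneg_left (exp_le_exp_add_exp h1 h2) (by positivity)
      _ = |x| ^ (k + 1) * Real.exp ((θ - δ) * x) + |x| ^ (k + 1) * Real.exp ((θ + δ) * x) := by
          ring
  · intro θ' _
    have h : HasDerivAt (fun t => Real.exp (t * x)) (Real.exp (θ' * x) * x) θ' := by
      simpa using ((hasDerivAt_id θ').mul_const x).exp
    have h2 := h.const_mul (x ^ k)
    exact h2.congr_deriv (by ring)

private lemma contDiffOn_Lfun (μ : Measure ℝ) :
    ∀ (n : ℕ) (k : ℕ), ContDiffOn ℝ n (Lfun μ k) (interior (laplaceDomain μ)) := by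
  intro n
  induction n with
  | zero =>
    intro k
    rw [show ((0 : ℕ) : WithTop ℕ∞) = 0 from rfl, contDiffOn_zero]
    exact fun θ hθ => (hasDerivAt_Lfun μ k hθ).continuousAt.continuousWithinAt
  | succ n ih =>
    intro k
    rw [show (((n + 1 : ℕ)) : WithTop ℕ∞) = (n : WithTop ℕ∞) + 1 by push_cast; ring,
      contDiffOn_succ_iff_deriv_of_isOpen isOpen_interior]
    refine ⟨fun θ hθ => ((hasDerivAt_Lfun μ k hθ).differentiableAt).differentiableWithinAt,
      ?_, (ih (k + 1)).congr fun θ hθ => (hasDerivAt_Lfun μ k hθ).deriv⟩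
    intro h
    simp at h

private lemma contDiffOn_cumulant (μ : Measure ℝ) [IsProbabilityMeasure μ] :
    ContDiffOn ℝ ∞ (cumulant μ) (interior (laplaceDomain μ)) := by
  have hL : ContDiffOn ℝ ∞ (Lfun μ 0) (interior (laplaceDomain μ)) :=
    contDiffOn_infty.mpr fun n => contDiffOn_Lfun μ n 0
  have hpos : ∀ θ ∈ interior (laplaceDomain μ), 0 < Lfun μ 0 θ := by
    intro θ hθ
    have hmemd : θ ∈ laplaceDomain μ := interior_subset hθ
    have hint : Integrable (fun x => Real.exp (θ * x)) μ := hmemd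
    have heq : Lfun μ 0 θ = ∫ x, Real.exp (θ * x) ∂μ := by
      unfold Lfun; simp
    rw [heq]
    exact integral_exp_pos hint
  have h := hL.log fun θ hθ => (hpos θ hθ).ne'
  refine h.congr fun θ hθ => ?_
  unfold cumulant Lfun
  simp

private lemma nef_struct (M : Set ℝ) (hM : IsOpen M) (ψ c : ℝ → ℝ)
    (hψ : ContDiffOn ℝ ∞ ψ M) (hc : ContDiffOn ℝ ∞ c M) (n : ℕ) :
    ∃ (N : ℕ) (a : ℕ → ℝ → ℝ), (∀ i, ContDiffOn ℝ ∞ (a i) M) ∧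
      (∀ i, N ≤ i → a i = fun _ => 0) ∧
      ∀ (x : ℝ), ∀ m ∈ M, iteratedDeriv n (fun m' => Real.exp (ψ m' * x - c m')) m
        = (∑ i ∈ Finset.range N, a i m * x ^ i) * Real.exp (ψ m * x - c m) := by
  induction n with
  | zero =>
    refine ⟨1, fun i => if i = 0 then (fun _ => 1) else fun _ => 0, ?_, ?_, ?_⟩
    · intro i
      rcases eq_or_ne i 0 with h | h
      · simp only [h, if_pos rfl]; exact contDiffOn_const
      · simp only [if_neg h]; exact contDiffOn_const
    · intro i hi
      have : i ≠ 0 := by omega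
      simp [this]
    · intro x m hm
      simp [iteratedDeriv_zero]
  | succ n ih =>
    obtain ⟨N, a, ha, hz, hfa⟩ := ih
    have hinfsucc : (∞ : WithTop ℕ∞) + 1 ≤ ∞ := le_of_eq (by rfl)
    have hψ' := hψ.deriv_of_isOpen hM hinfsucc
    have hc' := hc.deriv_of_isOpen hM hinfsucc
    have ha' : ∀ i, ContDiffOn ℝ ∞ (deriv (a i)) M := fun i => (ha i).deriv_of_isOpen hM hinfsucc
    set b : ℕ → ℝ → ℝ := fun i m =>
      deriv (a i) m - deriv c m * a i m + deriv ψ m * (if i = 0 then 0 else a (i - 1) m)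
      with hbdef
    refine ⟨N + 1, b, ?_, ?_, ?_⟩
    · intro i
      have h1 : ContDiffOn ℝ ∞ (fun m => if i = 0 then (0:ℝ) else a (i - 1) m) M := by
        rcases eq_or_ne i 0 with h | h
        · simp only [h, if_pos rfl]; exact contDiffOn_const
        · simp only [if_neg h]; exact ha _
      exact ((ha' i).sub (hc'.mul (ha i))).add (hψ'.mul h1)
    · intro i hi
      have h0 : a i = fun _ => 0 := hz i (by omega)
      have h1 : a (i - 1) = fun _ => 0 := hz _ (by omega)
      have h2 : i ≠ 0 := by omega
      funext m
      simp [hbdef, h0, h1, h2]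
    · intro x m hm
      have hmnhds : M ∈ 𝓝 m := hM.mem_nhds hm
      have heq : (fun m' => (∑ i ∈ Finset.range N, a i m' * x ^ i) * Real.exp (ψ m' * x - c m'))
          =ᶠ[𝓝 m] iteratedDeriv n (fun m' => Real.exp (ψ m' * x - c m')) :=
        Filter.eventually_of_mem hmnhds fun m' hm' => (hfa x m' hm').symm
      have hD : ∀ (u : ℝ → ℝ), ContDiffOn ℝ ∞ u M → HasDerivAt u (deriv u m) m := fun u hu =>
        ((hu.differentiableOn (by simp)).differentiableAt hmnhds).hasDerivAt
      have hsum : HasDerivAt (fun m' => ∑ i ∈ Finset.range N, a i m' * x ^ i)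
          (∑ i ∈ Finset.range N, deriv (a i) m * x ^ i) m :=
        HasDerivAt.fun_sum fun i _ => (hD (a i) (ha i)).mul_const _
      have hexp : HasDerivAt (fun m' => Real.exp (ψ m' * x - c m'))
          (Real.exp (ψ m * x - c m) * (deriv ψ m * x - deriv c m)) m :=
        (((hD ψ hψ).mul_const x).sub (hD c hc)).exp
      have hg := hsum.mul hexp
      have hder : iteratedDeriv (n + 1) (fun m' => Real.exp (ψ m' * x - c m')) m
          = (∑ i ∈ Finset.range N, deriv (a i) m * x ^ i) * Real.exp (ψ m * x - c m)
            + (∑ i ∈ Finset.range N, a i m * x ^ i)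
              * (Real.exp (ψ m * x - c m) * (deriv ψ m * x - deriv c m)) := by
        rw [iteratedDeriv_succ, ← heq.deriv_eq]
        exact hg.deriv
      rw [hder]
      have hzN : a N = fun _ => 0 := hz N le_rfl
      have e1 : ∑ i ∈ Finset.range (N + 1), b i m * x ^ i
          = ∑ i ∈ Finset.range (N + 1), deriv (a i) m * x ^ i
            - ∑ i ∈ Finset.range (N + 1), deriv c m * a i m * x ^ i
            + ∑ i ∈ Finset.range (N + 1),
                deriv ψ m * (if i = 0 then 0 else a (i - 1) m) * x ^ i := by
        rw [← Finset.sum_sub_distrib, ← Finset.sum_add_distrib]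
        refine Finset.sum_congr rfl fun i _ => ?_
        simp only [hbdef]
        ring
      have e2 : ∑ i ∈ Finset.range (N + 1), deriv (a i) m * x ^ i
          = ∑ i ∈ Finset.range N, deriv (a i) m * x ^ i := by
        rw [Finset.sum_range_succ, hzN]
        simp
      have e3 : ∑ i ∈ Finset.range (N + 1), deriv c m * a i m * x ^ i
          = deriv c m * ∑ i ∈ Finset.range N, a i m * x ^ i := by
        rw [Finset.sum_range_succ, hzN, Finset.mul_sum]
        simp [mul_assoc]
      have e4 : ∑ i ∈ Finset.range (N + 1),
            deriv ψ m * (if i = 0 then 0 else a (i - 1) m) * x ^ i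
          = deriv ψ m * x * ∑ i ∈ Finset.range N, a i m * x ^ i := by
        rw [Finset.sum_range_succ', Finset.mul_sum]
        have h0 : (deriv ψ m * if (0:ℕ) = 0 then 0 else a (0 - 1) m) * x ^ 0 = 0 := by simp
        rw [h0, add_zero]
        refine Finset.sum_congr rfl fun i _ => ?_
        have hne : i + 1 ≠ 0 := Nat.succ_ne_zero i
        simp only [if_neg hne, Nat.add_sub_cancel]
        rw [pow_succ]; ring
      have hsum_eq : ∑ i ∈ Finset.range (N + 1), b i m * x ^ i
          = (∑ i ∈ Finset.range N, deriv (a i) m * x ^ i)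
            - deriv c m * (∑ i ∈ Finset.range N, a i m * x ^ i)
            + deriv ψ m * x * (∑ i ∈ Finset.range N, a i m * x ^ i) := by
        rw [e1, e2, e3, e4]
      rw [hsum_eq]
      ring

private lemma nef_hasDerivAt_iteratedDeriv (M : Set ℝ) (hM : IsOpen M) (ψ c : ℝ → ℝ)
    (hψ : ContDiffOn ℝ ∞ ψ M) (hc : ContDiffOn ℝ ∞ c M) (n : ℕ) (x : ℝ) {m : ℝ}
    (hm : m ∈ M) :
    HasDerivAt (iteratedDeriv n (fun m' => Real.exp (ψ m' * x - c m')))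
      (iteratedDeriv (n + 1) (fun m' => Real.exp (ψ m' * x - c m')) m) m := by
  obtain ⟨N, a, ha, hz, hfa⟩ := nef_struct M hM ψ c hψ hc n
  have hmnhds : M ∈ 𝓝 m := hM.mem_nhds hm
  have hD : ∀ (u : ℝ → ℝ), ContDiffOn ℝ ∞ u M → DifferentiableAt ℝ u m := fun u hu =>
    (hu.differentiableOn (by simp)).differentiableAt hmnhds
  have hgd : DifferentiableAt ℝ
      (fun m' => (∑ i ∈ Finset.range N, a i m' * x ^ i) * Real.exp (ψ m' * x - c m')) m := by
    refine DifferentiableAt.mul ?_ ?_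
    · exact DifferentiableAt.fun_sum fun i _ => (hD (a i) (ha i)).mul_const _
    · exact ((((hD ψ hψ).hasDerivAt.mul_const x).sub (hD c hc).hasDerivAt).exp).differentiableAt
  have heq : iteratedDeriv n (fun m' => Real.exp (ψ m' * x - c m'))
      =ᶠ[𝓝 m] fun m' => (∑ i ∈ Finset.range N, a i m' * x ^ i) * Real.exp (ψ m' * x - c m') :=
    Filter.eventually_of_mem hmnhds fun m' hm' => hfa x m' hm'
  have hdiff : DifferentiableAt ℝ (iteratedDeriv n (fun m' => Real.exp (ψ m' * x - c m'))) m :=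
    heq.differentiableAt_iff.mpr hgd
  rw [iteratedDeriv_succ]
  exact hdiff.hasDerivAt

/-- With `μ = P(m₀,F)` and `P_n(x) = ∂ⁿ/∂mⁿ f_μ(x,m)|_{m=m₀}`, one has
`∫ P_n dμ = 0` for every `n ≥ 1`. -/
theorem integral_feinsilver_eq_zero (μ : Measure ℝ) [IsProbabilityMeasure μ]
    (hμpt : ∀ c : ℝ, μ {c}ᶜ ≠ 0)
    (ψ : ℝ → ℝ) (M : Set ℝ) (hM : IsOpen M)
    (hmem : ∀ m ∈ M, ψ m ∈ interior (laplaceDomain μ))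
    (hinv : ∀ m ∈ M, deriv (cumulant μ) (ψ m) = m)
    (hψ : ContDiffOn ℝ (⊤ : ℕ∞) ψ M)
    (m₀ : ℝ) (hm₀ : m₀ ∈ M) (hψ₀ : ψ m₀ = 0)
    (n : ℕ) (hn : 1 ≤ n) :
    ∫ x, iteratedDerivWithin n (fun m' => nefDensity μ ψ x m') M m₀ ∂μ = 0 := by
  set c : ℝ → ℝ := fun m => cumulant μ (ψ m) with hcdef
  have hψ' : ContDiffOn ℝ ∞ ψ M := hψ.of_le (mod_cast le_top)
  have hc : ContDiffOn ℝ ∞ c M :=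
    (contDiffOn_cumulant μ).comp hψ' fun m hm => hmem m hm
  set G : ℕ → ℝ → ℝ :=
    fun k m => ∫ x, iteratedDeriv k (fun m' => Real.exp (ψ m' * x - c m')) m ∂μ with hGdef
  have hint_form : ∀ (N : ℕ) (a : ℕ → ℝ → ℝ) (m : ℝ), m ∈ M →
      Integrable (fun x => (∑ i ∈ Finset.range N, a i m * x ^ i)
        * Real.exp (ψ m * x - c m)) μ := by
    intro N a m hm
    have hθ := hmem m hm
    have heq : (fun x => (∑ i ∈ Finset.range N, a i m * x ^ i) * Real.exp (ψ m * x - c m))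
        = fun x => ∑ i ∈ Finset.range N,
            (a i m * Real.exp (-c m)) * (x ^ i * Real.exp (ψ m * x)) := by
      funext x
      rw [Finset.sum_mul]
      refine Finset.sum_congr rfl fun i _ => ?_
      rw [sub_eq_add_neg, Real.exp_add]
      ring
    rw [heq]
    exact integrable_finset_sum _ fun i _ => (integrable_pow_exp μ hθ i).const_mul _
  have hG : ∀ (k : ℕ) (m : ℝ), m ∈ M → HasDerivAt (G k) (G (k + 1) m) m := by
    intro k m hm
    obtain ⟨ε, hε, hball⟩ := Metric.isOpen_iff.mp hM m hm
    set δ := ε / 2 with hδdef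
    have hδ : 0 < δ := by positivity
    have hKM : Metric.closedBall m δ ⊆ M :=
      (Metric.closedBall_subset_ball (by rw [hδdef]; linarith)).trans hball
    obtain ⟨N, a, ha, hza, hfa⟩ := nef_struct M hM ψ c hψ' hc k
    obtain ⟨N', b, hb, hzb, hfb⟩ := nef_struct M hM ψ c hψ' hc (k + 1)
    have hKc : IsCompact (Metric.closedBall m δ) := isCompact_closedBall m δ
    have hmK : m ∈ Metric.closedBall m δ := Metric.mem_closedBall_self hδ.le
    have hCb : ∀ i : ℕ, ∃ C : ℝ, ∀ m' ∈ Metric.closedBall m δ, |b i m'| ≤ C := by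
      intro i
      obtain ⟨C, hC⟩ := hKc.exists_bound_of_continuousOn (((hb i).continuousOn).mono hKM)
      exact ⟨C, fun m' hm' => by simpa [Real.norm_eq_abs] using hC m' hm'⟩
    choose C hC using hCb
    have hCpos : ∀ i, 0 ≤ C i := fun i => le_trans (abs_nonneg _) (hC i m hmK)
    obtain ⟨Cc, hCc⟩ := hKc.exists_bound_of_continuousOn
      (Real.continuous_exp.comp_continuousOn ((hc.continuousOn.mono hKM).neg))
    have hCc' : ∀ m' ∈ Metric.closedBall m δ, Real.exp (-c m') ≤ Cc := fun m' hm' => by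
      have h := hCc m' hm'
      simpa [Function.comp, abs_of_nonneg (Real.exp_pos (-c m')).le] using h
    have hCcpos : 0 ≤ Cc := le_trans (Real.exp_pos _).le (hCc' m hmK)
    obtain ⟨mlo, hmlo, hlo⟩ := hKc.exists_isMinOn ⟨m, hmK⟩ ((hψ'.continuousOn).mono hKM)
    obtain ⟨mhi, hmhi, hhi⟩ := hKc.exists_isMaxOn ⟨m, hmK⟩ ((hψ'.continuousOn).mono hKM)
    have hθlo : ψ mlo ∈ interior (laplaceDomain μ) := hmem _ (hKM hmlo)
    have hθhi : ψ mhi ∈ interior (laplaceDomain μ) := hmem _ (hKM hmhi)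
    set bound : ℝ → ℝ := fun x => ∑ i ∈ Finset.range N',
      (Cc * C i) * (|x| ^ i * Real.exp (ψ mlo * x) + |x| ^ i * Real.exp (ψ mhi * x))
      with hbounddef
    have hbound_int : Integrable bound μ := integrable_finset_sum _ fun i _ =>
      ((integrable_abs_pow_exp μ hθlo i).add (integrable_abs_pow_exp μ hθhi i)).const_mul _
    have hptbd : ∀ (x : ℝ), ∀ m' ∈ Metric.ball m δ,
        ‖iteratedDeriv (k + 1) (fun m'' => Real.exp (ψ m'' * x - c m'')) m'‖ ≤ bound x := by
      intro x m' hm'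
      have hm'K : m' ∈ Metric.closedBall m δ := Metric.ball_subset_closedBall hm'
      have hm'M : m' ∈ M := hKM hm'K
      rw [hfb x m' hm'M, Real.norm_eq_abs, abs_mul, abs_of_nonneg (Real.exp_pos _).le]
      have h1 : |∑ i ∈ Finset.range N', b i m' * x ^ i|
          ≤ ∑ i ∈ Finset.range N', C i * |x| ^ i := by
        refine (Finset.abs_sum_le_sum_abs _ _).trans (Finset.sum_le_sum fun i _ => ?_)
        rw [abs_mul, abs_pow]
        exact mul_le_mul_of_nonneg_right (hC i m' hm'K) (by positivity)
      have h2 : Real.exp (ψ m' * x - c m')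
          ≤ (Real.exp (ψ mlo * x) + Real.exp (ψ mhi * x)) * Cc := by
        rw [sub_eq_add_neg, Real.exp_add]
        have hee : Real.exp (ψ m' * x) ≤ Real.exp (ψ mlo * x) + Real.exp (ψ mhi * x) :=
          exp_le_exp_add_exp (isMinOn_iff.mp hlo m' hm'K) (isMaxOn_iff.mp hhi m' hm'K)
        exact mul_le_mul hee (hCc' m' hm'K) (Real.exp_pos _).le (by positivity)
      calc |∑ i ∈ Finset.range N', b i m' * x ^ i| * Real.exp (ψ m' * x - c m')
          ≤ (∑ i ∈ Finset.range N', C i * |x| ^ i)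
            * ((Real.exp (ψ mlo * x) + Real.exp (ψ mhi * x)) * Cc) := by
            refine mul_le_mul h1 h2 (Real.exp_pos _).le ?_
            exact Finset.sum_nonneg fun i _ => mul_nonneg (hCpos i) (by positivity)
        _ = bound x := by
            rw [hbounddef, Finset.sum_mul]
            exact Finset.sum_congr rfl fun i _ => by ring
    have hFm_int :
        Integrable (fun x => iteratedDeriv k (fun m' => Real.exp (ψ m' * x - c m')) m) μ := by
      have heq : (fun x => iteratedDeriv k (fun m' => Real.exp (ψ m' * x - c m')) m)
          = fun x => (∑ i ∈ Finset.range N, a i m * x ^ i) * Real.exp (ψ m * x - c m) :=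
        funext fun x => hfa x m hm
      rw [heq]
      exact hint_form N a m hm
    have hmeas : ∀ m' ∈ M, AEStronglyMeasurable
        (fun x => iteratedDeriv k (fun m'' => Real.exp (ψ m'' * x - c m'')) m') μ := by
      intro m' hm'
      have heq : (fun x => iteratedDeriv k (fun m'' => Real.exp (ψ m'' * x - c m'')) m')
          = fun x => (∑ i ∈ Finset.range N, a i m' * x ^ i) * Real.exp (ψ m' * x - c m') :=
        funext fun x => hfa x m' hm'
      rw [heq]
      refine Continuous.aestronglyMeasurable ?_
      exact (continuous_finset_sum _ fun i _ => (continuous_const.mul (continuous_pow i))).mul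
        (((continuous_const.mul continuous_id).sub continuous_const).rexp)
    have hmeas' : AEStronglyMeasurable
        (fun x => iteratedDeriv (k + 1) (fun m'' => Real.exp (ψ m'' * x - c m'')) m) μ := by
      have heq : (fun x => iteratedDeriv (k + 1) (fun m'' => Real.exp (ψ m'' * x - c m'')) m)
          = fun x => (∑ i ∈ Finset.range N', b i m * x ^ i) * Real.exp (ψ m * x - c m) :=
        funext fun x => hfb x m hm
      rw [heq]
      refine Continuous.aestronglyMeasurable ?_
      exact (continuous_finset_sum _ fun i _ => (continuous_const.mul (continuous_pow i))).mul
        (((continuous_const.mul continuous_id).sub continuous_const).rexp)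
    have hmain := hasDerivAt_integral_of_dominated_loc_of_deriv_le (μ := μ) (x₀ := m) (s := Metric.ball m δ)
      (F := fun m' x => iteratedDeriv k (fun m'' => Real.exp (ψ m'' * x - c m'')) m')
      (F' := fun m' x => iteratedDeriv (k + 1) (fun m'' => Real.exp (ψ m'' * x - c m'')) m')
      (bound := bound) (Metric.ball_mem_nhds m hδ)
      (Filter.eventually_of_mem (hM.mem_nhds hm) hmeas)
      hFm_int hmeas'
      (Filter.Eventually.of_forall fun x m' hm' => hptbd x m' hm')
      hbound_int
      (Filter.Eventually.of_forall fun x m' hm' =>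
        nef_hasDerivAt_iteratedDeriv M hM ψ c hψ' hc k x (hKM (Metric.ball_subset_closedBall hm')))
    exact hmain.2
  have hG0 : ∀ m ∈ M, G 0 m = 1 := by
    intro m hm
    have hθ := hmem m hm
    have hmemd : ψ m ∈ laplaceDomain μ := interior_subset hθ
    have hint : Integrable (fun x => Real.exp (ψ m * x)) μ := hmemd
    have hpos : 0 < ∫ x, Real.exp (ψ m * x) ∂μ := integral_exp_pos hint
    have h1 : G 0 m = ∫ x, Real.exp (ψ m * x - c m) ∂μ := by
      rw [hGdef]
      simp [iteratedDeriv_zero]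
    rw [h1]
    have h2 : (fun x => Real.exp (ψ m * x - c m))
        = fun x => Real.exp (ψ m * x) / Real.exp (c m) := funext fun x => Real.exp_sub _ _
    rw [h2, integral_div]
    have h3 : Real.exp (c m) = ∫ x, Real.exp (ψ m * x) ∂μ := by
      rw [hcdef]
      exact Real.exp_log hpos
    rw [h3, div_self hpos.ne']
  have hGz : ∀ (k : ℕ), ∀ m ∈ M, G (k + 1) m = 0 := by
    intro k
    induction k with
    | zero =>
      intro m hm
      have h1 : HasDerivAt (G 0) (G 1 m) m := hG 0 m hm
      have h2 : HasDerivAt (G 0) 0 m := by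
        have heq : G 0 =ᶠ[𝓝 m] fun _ => 1 :=
          Filter.eventually_of_mem (hM.mem_nhds hm) fun m' hm' => hG0 m' hm'
        exact (hasDerivAt_const m (1 : ℝ)).congr_of_eventuallyEq heq
      exact h1.unique h2
    | succ k ih =>
      intro m hm
      have h1 : HasDerivAt (G (k + 1)) (G (k + 2) m) m := hG (k + 1) m hm
      have h2 : HasDerivAt (G (k + 1)) 0 m := by
        have heq : G (k + 1) =ᶠ[𝓝 m] fun _ => 0 :=
          Filter.eventually_of_mem (hM.mem_nhds hm) fun m' hm' => ih m' hm'
        exact (hasDerivAt_const m (0 : ℝ)).congr_of_eventuallyEq heq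
      exact h1.unique h2
  obtain ⟨k, rfl⟩ : ∃ k, n = k + 1 := ⟨n - 1, by omega⟩
  have hrw : ∀ x : ℝ, iteratedDerivWithin (k + 1) (fun m' => nefDensity μ ψ x m') M m₀
      = iteratedDeriv (k + 1) (fun m' => Real.exp (ψ m' * x - c m')) m₀ := by
    intro x
    have h1 : (fun m' => nefDensity μ ψ x m') = fun m' => Real.exp (ψ m' * x - c m') := rfl
    rw [h1, iteratedDerivWithin_eq_iteratedFDerivWithin, iteratedDeriv_eq_iteratedFDeriv,
      iteratedFDerivWithin_of_isOpen _ hM hm₀]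
  calc ∫ x, iteratedDerivWithin (k + 1) (fun m' => nefDensity μ ψ x m') M m₀ ∂μ
      = ∫ x, iteratedDeriv (k + 1) (fun m' => Real.exp (ψ m' * x - c m')) m₀ ∂μ := by
        exact congrArg (fun g => ∫ x, g x ∂μ) (funext hrw)
    _ = 0 := hGz k m₀ hm₀
end

section
/- Let F be a NEF, μ ∈ F with mean m_0, and P_n the Feinsilver polynomials defined by P_n(x) = ∂ⁿ/∂mⁿ f_μ(x,m)|_{m=m_0}. Then the power series ∑_{n≥0} ((m−m_0)ⁿ/n!) P_n, viewed as a series with coefficients in L²(μ), has nonzero radius of convergence; i.e., ∑_n ‖P_n‖_{L²(μ)} rⁿ/n! < ∞ for some r > 0. -/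
open MeasureTheory Real

open Filter Set

lemma deriv_ofReal_comp' (f : ℝ → ℝ) (t : ℝ) :
    deriv (fun s : ℝ => ((f s : ℝ) : ℂ)) t = ((deriv f t : ℝ) : ℂ) := by
  by_cases h : DifferentiableAt ℝ f t
  · exact h.hasDerivAt.ofReal_comp.deriv
  · rw [deriv_zero_of_not_differentiableAt h, deriv_zero_of_not_differentiableAt,
      Complex.ofReal_zero]
    intro hd
    have := (Complex.reCLM.differentiableAt (x := ((f t : ℝ) : ℂ))).comp t hd
    exact h (by simpa [Function.comp_def] using this)

lemma iteratedDeriv_ofReal_comp (f : ℝ → ℝ) (n : ℕ) :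
    iteratedDeriv n (fun s : ℝ => ((f s : ℝ) : ℂ))
      = fun t => ((iteratedDeriv n f t : ℝ) : ℂ) := by
  induction n with
  | zero => simp
  | succ n ih =>
    funext t
    rw [iteratedDeriv_succ, iteratedDeriv_succ, ih, deriv_ofReal_comp']

lemma iteratedDeriv_comp_ofReal_of_analytic {h : ℂ → ℂ} {s : Set ℂ} (hs : IsOpen s)
    (hh : AnalyticOnNhd ℂ h s) (n : ℕ) : ∀ {t : ℝ}, (t : ℂ) ∈ s →
    iteratedDeriv n (fun u : ℝ => h u) t = iteratedDeriv n h t := by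
  have hiter : ∀ m : ℕ, AnalyticOnNhd ℂ (iteratedDeriv m h) s := by
    intro m
    induction m with
    | zero => simpa using hh
    | succ m ih => rw [iteratedDeriv_succ]; exact ih.deriv
  induction n with
  | zero => intro t _; simp
  | succ n ih =>
    intro t ht
    rw [iteratedDeriv_succ, iteratedDeriv_succ]
    have hev : (fun u : ℝ => iteratedDeriv n (fun v : ℝ => h v) u)
        =ᶠ[nhds t] fun u : ℝ => iteratedDeriv n h u := by
      have hmem : ∀ᶠ u : ℝ in nhds t, (u : ℂ) ∈ s :=
        (Complex.continuous_ofReal.continuousAt).preimage_mem_nhds (hs.mem_nhds ht)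
      filter_upwards [hmem] with u hu
      exact ih hu
    rw [hev.deriv_eq]
    exact (((hiter n (t : ℂ) ht).differentiableAt.hasDerivAt).comp_ofReal).deriv

/-- Theorem 2.1: the series `∑ ((m−m₀)ⁿ/n!) P_n` with coefficients in `L²(μ)` has a
nonzero radius of convergence: `∑ ‖P_n‖_{L²(μ)} rⁿ/n! < ∞` for some `r > 0`. -/
theorem feinsilver_series_pos_radius (μ : Measure ℝ) [IsProbabilityMeasure μ]
    (hμpt : ∀ c : ℝ, μ {c}ᶜ ≠ 0)
    (ψ : ℝ → ℝ) (M : Set ℝ) (hM : IsOpen M)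
    (hmem : ∀ m ∈ M, ψ m ∈ interior (laplaceDomain μ))
    (hinv : ∀ m ∈ M, deriv (cumulant μ) (ψ m) = m)
    (hψ : ContDiffOn ℝ (⊤ : ℕ∞) ψ M)
    (m₀ : ℝ) (hm₀ : m₀ ∈ M) (hψ₀ : ψ m₀ = 0) :
    ∃ r : ℝ, 0 < r ∧ Summable (fun n : ℕ =>
      Real.sqrt (∫ x, (iteratedDerivWithin n (fun m' => nefDensity μ ψ x m') M m₀) ^ 2 ∂μ)
        * r ^ n / n.factorial) := by
  classical
  -- ### Setup: a ball inside the Laplace domain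
  have h0mem : (0 : ℝ) ∈ interior (laplaceDomain μ) := hψ₀ ▸ hmem m₀ hm₀
  obtain ⟨ε₀, hε₀, hball⟩ :=
    Metric.mem_nhds_iff.mp (mem_interior_iff_mem_nhds.mp h0mem)
  set δ : ℝ := ε₀ / 8 with hδ_def
  have hδ : 0 < δ := by positivity
  have hint : ∀ c : ℝ, |c| < ε₀ → Integrable (fun x => Real.exp (c * x)) μ := by
    intro c hc
    exact hball (by simpa [Real.dist_eq] using hc)
  have hintabs : ∀ c : ℝ, 0 ≤ c → c < ε₀ → Integrable (fun x => Real.exp (c * |x|)) μ := by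
    intro c h0c hc
    have h1 := hint c (by rwa [abs_of_nonneg h0c])
    have h2 := hint (-c) (by rwa [abs_neg, abs_of_nonneg h0c])
    refine (h1.add h2).mono' ?_ ?_
    · exact (Real.continuous_exp.comp (continuous_const.mul continuous_abs)).aestronglyMeasurable
    · refine ae_of_all _ fun x => ?_
      rw [Real.norm_eq_abs, abs_of_nonneg (Real.exp_pos _).le]
      simp only [Pi.add_apply]
      rcases le_total 0 x with hx | hx
      · rw [abs_of_nonneg hx]; linarith [Real.exp_pos (-c * x)]
      · rw [abs_of_nonpos hx, show c * -x = -c * x by ring]; linarith [Real.exp_pos (c * x)]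
  -- ### Master bound
  have master : ∀ j : ℕ, j ≤ 2 → ∀ z : ℂ, |z.re| ≤ 2 * δ → ∀ x : ℝ,
      ‖Complex.exp (z * x) * (x : ℂ) ^ j‖ ≤ (1 + δ⁻¹ + δ⁻¹ ^ 2) * Real.exp (4 * δ * |x|) := by
    intro j hj z hz x
    have hδi : 0 < δ⁻¹ := by positivity
    have h1 : ‖Complex.exp (z * x)‖ = Real.exp (z.re * x) := by
      rw [Complex.norm_exp]
      congr 1
      simp [Complex.mul_re]
    have h2 : ‖(x : ℂ) ^ j‖ = |x| ^ j := by
      rw [norm_pow, Complex.norm_real, Real.norm_eq_abs]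
    have h3 : Real.exp (z.re * x) ≤ Real.exp (2 * δ * |x|) := by
      apply Real.exp_le_exp.2
      calc z.re * x ≤ |z.re * x| := le_abs_self _
        _ = |z.re| * |x| := abs_mul _ _
        _ ≤ 2 * δ * |x| := mul_le_mul_of_nonneg_right hz (abs_nonneg x)
    have ht : δ * |x| ≤ Real.exp (δ * |x|) := by
      linarith [Real.add_one_le_exp (δ * |x|)]
    have h4 : |x| ^ j ≤ δ⁻¹ ^ j * Real.exp (2 * δ * |x|) := by
      have hbase : |x| = δ⁻¹ * (δ * |x|) := by field_simp
      calc |x| ^ j = (δ⁻¹ * (δ * |x|)) ^ j := by rw [← hbase]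
        _ = δ⁻¹ ^ j * (δ * |x|) ^ j := mul_pow _ _ _
        _ ≤ δ⁻¹ ^ j * Real.exp (δ * |x|) ^ j := by
            refine mul_le_mul_of_nonneg_left (pow_le_pow_left₀ (by positivity) ht j)
              (by positivity)
        _ = δ⁻¹ ^ j * Real.exp (j * (δ * |x|)) := by rw [← Real.exp_nat_mul]
        _ ≤ δ⁻¹ ^ j * Real.exp (2 * δ * |x|) := by
            refine mul_le_mul_of_nonneg_left (Real.exp_le_exp.2 ?_) (by positivity)
            have hj' : (j : ℝ) ≤ 2 := by exact_mod_cast hj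
            nlinarith [abs_nonneg x, hδ.le]
    have h6 : (0 : ℝ) < δ⁻¹ ^ 2 := by positivity
    have h5 : δ⁻¹ ^ j ≤ 1 + δ⁻¹ + δ⁻¹ ^ 2 := by
      interval_cases j
      · simp only [pow_zero]; linarith
      · simp only [pow_one]; linarith
      · linarith
    calc ‖Complex.exp (z * x) * (x : ℂ) ^ j‖ = Real.exp (z.re * x) * |x| ^ j := by
          rw [norm_mul, h1, h2]
      _ ≤ Real.exp (2 * δ * |x|) * (δ⁻¹ ^ j * Real.exp (2 * δ * |x|)) := by
          apply mul_le_mul h3 h4 (by positivity) (by positivity)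
      _ = δ⁻¹ ^ j * (Real.exp (2 * δ * |x|) * Real.exp (2 * δ * |x|)) := by ring
      _ = δ⁻¹ ^ j * Real.exp (4 * δ * |x|) := by
          rw [← Real.exp_add, show 2 * δ * |x| + 2 * δ * |x| = 4 * δ * |x| by ring]
      _ ≤ (1 + δ⁻¹ + δ⁻¹ ^ 2) * Real.exp (4 * δ * |x|) := by
          gcongr
  have hBint : Integrable (fun x => (1 + δ⁻¹ + δ⁻¹ ^ 2) * Real.exp (4 * δ * |x|)) μ := by
    refine (hintabs (4 * δ) (by positivity) (by rw [hδ_def]; linarith)).const_mul _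
  have hcont : ∀ (j : ℕ) (z : ℂ), Continuous (fun x : ℝ => Complex.exp (z * x) * (x : ℂ) ^ j) := by
    intro j z
    exact (Complex.continuous_exp.comp (continuous_const.mul Complex.continuous_ofReal)).mul
      (Complex.continuous_ofReal.pow j)
  -- ### Differentiation under the integral sign (complex)
  have hasD : ∀ j : ℕ, j ≤ 1 → ∀ z₀ : ℂ, |z₀.re| < 2 * δ →
      HasDerivAt (fun z => ∫ x, Complex.exp (z * x) * (x : ℂ) ^ j ∂μ)
        (∫ x, Complex.exp (z₀ * x) * (x : ℂ) ^ (j + 1) ∂μ) z₀ := by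
    intro j hj z₀ hz₀
    have hε : (0 : ℝ) < 2 * δ - |z₀.re| := by linarith
    have hre : ∀ z : ℂ, z ∈ Metric.ball z₀ (2 * δ - |z₀.re|) → |z.re| ≤ 2 * δ := by
      intro z hz
      have h1 : |z.re - z₀.re| ≤ ‖z - z₀‖ := by
        simpa [Complex.sub_re] using Complex.abs_re_le_norm (z - z₀)
      have h2 : ‖z - z₀‖ < 2 * δ - |z₀.re| := by
        simpa [dist_eq_norm] using hz
      have := abs_sub_abs_le_abs_sub z.re z₀.re
      linarith [abs_abs_sub_abs_le_abs_sub z.re z₀.re, le_abs_self (z.re - z₀.re),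
        neg_abs_le (z.re - z₀.re)]
    have key := hasDerivAt_integral_of_dominated_loc_of_deriv_le
      (F := fun z (x : ℝ) => Complex.exp (z * x) * (x : ℂ) ^ j)
      (F' := fun z (x : ℝ) => Complex.exp (z * x) * (x : ℂ) ^ (j + 1))
      (x₀ := z₀) (bound := fun x => (1 + δ⁻¹ + δ⁻¹ ^ 2) * Real.exp (4 * δ * |x|))
      (μ := μ) (Metric.ball_mem_nhds z₀ hε)
      (Eventually.of_forall fun z => (hcont j z).aestronglyMeasurable)
      ((hBint.mono' (hcont j z₀).aestronglyMeasurable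
        (ae_of_all _ fun x => master j (by omega) z₀ hz₀.le x)))
      (hcont (j + 1) z₀).aestronglyMeasurable
      (ae_of_all _ fun x z hz => master (j + 1) (by omega) z (hre z hz) x)
      hBint
      (ae_of_all _ fun x z _ => ?_)
    · exact key.2
    · -- HasDerivAt of the integrand in z
      have base : HasDerivAt (fun z : ℂ => z * (x : ℂ)) (x : ℂ) z := hasDerivAt_mul_const _
      have hE := base.cexp
      have := hE.mul_const ((x : ℂ) ^ j)
      have e : Complex.exp (z * x) * (x : ℂ) * (x : ℂ) ^ j = Complex.exp (z * x) * (x : ℂ) ^ (j + 1) := by ring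
      rw [e] at this
      exact this
  
  have h2δ : 2 * δ < ε₀ := by rw [hδ_def]; linarith
  -- ### Real-side identifications
  have hGcReal : ∀ θ : ℝ, (∫ x, Complex.exp ((θ : ℂ) * x) ∂μ)
      = ((∫ x, Real.exp (θ * x) ∂μ : ℝ) : ℂ) := by
    intro θ
    calc ∫ x, Complex.exp ((θ:ℂ) * x) ∂μ = ∫ x, ((Real.exp (θ*x) : ℝ) : ℂ) ∂μ :=
          integral_congr_ae (ae_of_all _ fun x => by push_cast; ring)
      _ = _ := integral_ofReal
  have hGc1Real : ∀ θ : ℝ, (∫ x, Complex.exp ((θ : ℂ) * x) * (x : ℂ) ^ 1 ∂μ)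
      = ((∫ x, Real.exp (θ * x) * x ∂μ : ℝ) : ℂ) := by
    intro θ
    calc ∫ x, Complex.exp ((θ:ℂ) * x) * (x:ℂ)^1 ∂μ
          = ∫ x, ((Real.exp (θ*x) * x : ℝ) : ℂ) ∂μ :=
          integral_congr_ae (ae_of_all _ fun x => by push_cast; ring)
      _ = _ := integral_ofReal
  have hGc2Real : ∀ θ : ℝ, (∫ x, Complex.exp ((θ : ℂ) * x) * (x : ℂ) ^ 2 ∂μ)
      = ((∫ x, Real.exp (θ * x) * x ^ 2 ∂μ : ℝ) : ℂ) := by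
    intro θ
    calc ∫ x, Complex.exp ((θ:ℂ) * x) * (x:ℂ)^2 ∂μ
          = ∫ x, ((Real.exp (θ*x) * x^2 : ℝ) : ℂ) ∂μ :=
          integral_congr_ae (ae_of_all _ fun x => by push_cast; ring)
      _ = _ := integral_ofReal
  have hGpos : ∀ θ : ℝ, |θ| < ε₀ → 0 < ∫ x, Real.exp (θ * x) ∂μ := by
    intro θ hθ
    have h := ProbabilityTheory.mgf_pos (X := fun x : ℝ => x) (μ := μ) (t := θ) (hint θ hθ)
    simpa [ProbabilityTheory.mgf] using h
  -- ### Derivatives of the real Laplace transform and of the cumulant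
  have hGstep : ∀ θ : ℝ, |θ| < 2 * δ →
      HasDerivAt (fun t : ℝ => ∫ x, Real.exp (t * x) ∂μ)
        (∫ x, Real.exp (θ * x) * x ∂μ) θ := by
    intro θ hθ
    have h1 := hasD 0 (by norm_num) (θ : ℂ) (by simpa using hθ)
    simp only [pow_zero, mul_one, zero_add] at h1
    have h2 := h1.real_of_complex
    simp only [hGcReal, hGc1Real, Complex.ofReal_re] at h2
    exact h2
  have hm1step : ∀ θ : ℝ, |θ| < 2 * δ →
      HasDerivAt (fun t : ℝ => ∫ x, Real.exp (t * x) * x ∂μ)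
        (∫ x, Real.exp (θ * x) * x ^ 2 ∂μ) θ := by
    intro θ hθ
    have hGc1Real' : ∀ t : ℝ, (∫ x, Complex.exp ((t : ℂ) * x) * (x : ℂ) ∂μ)
        = ((∫ x, Real.exp (t * x) * x ∂μ : ℝ) : ℂ) := fun t => by
      simpa using hGc1Real t
    have h1 := hasD 1 le_rfl (θ : ℂ) (by simpa using hθ)
    norm_num at h1
    have h2 := h1.real_of_complex
    simp only [hGc1Real', hGc2Real, Complex.ofReal_re] at h2
    exact h2
  have hcum : ∀ θ : ℝ, |θ| < 2 * δ →
      HasDerivAt (cumulant μ)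
        ((∫ x, Real.exp (θ * x) * x ∂μ) / (∫ x, Real.exp (θ * x) ∂μ)) θ := by
    intro θ hθ
    have h0 : (∫ x, Real.exp (θ * x) ∂μ) ≠ 0 := (hGpos θ (by linarith)).ne'
    exact (hGstep θ hθ).log h0
  have hderivcum : ∀ θ : ℝ, |θ| < 2 * δ → deriv (cumulant μ) θ
      = (∫ x, Real.exp (θ * x) * x ∂μ) / (∫ x, Real.exp (θ * x) ∂μ) :=
    fun θ h => (hcum θ h).deriv
  -- ### Values at 0
  have hG0 : (∫ x, Real.exp ((0:ℝ) * x) ∂μ) = 1 := by simp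
  have hA0 : (∫ x, Real.exp ((0:ℝ) * x) * x ∂μ) = ∫ x, x ∂μ := by simp
  have hB0 : (∫ x, Real.exp ((0:ℝ) * x) * x ^ 2 ∂μ) = ∫ x, x ^ 2 ∂μ := by simp
  set A : ℝ := ∫ x, x ∂μ with hA_def
  set B : ℝ := ∫ x, x ^ 2 ∂μ with hB_def
  have h0lt : |(0:ℝ)| < 2 * δ := by rw [abs_zero]; linarith
  have hc'deriv : HasDerivAt
      (fun θ : ℝ => (∫ x, Real.exp (θ * x) * x ∂μ) / (∫ x, Real.exp (θ * x) ∂μ))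
      (B - A * A) 0 := by
    have h0 : (∫ x, Real.exp ((0:ℝ) * x) ∂μ) ≠ 0 := by rw [hG0]; norm_num
    have hq := (hm1step 0 h0lt).div (hGstep 0 h0lt) h0
    rw [hG0, hA0, hB0] at hq
    have e : ((B * 1 - A * A) / 1 ^ 2 : ℝ) = B - A * A := by norm_num
    rw [e] at hq
    exact hq
  -- ### Positivity of the variance
  have hxj : ∀ j : ℕ, j ≤ 2 → Integrable (fun x : ℝ => x ^ j) μ := by
    intro j hj
    refine hBint.mono' (continuous_pow j).aestronglyMeasurable (ae_of_all _ fun x => ?_)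
    have h := master j hj 0 (by simpa using (by positivity : (0:ℝ) ≤ 2 * δ)) x
    simp only [zero_mul, Complex.exp_zero, one_mul, norm_pow, Complex.norm_real,
      Real.norm_eq_abs] at h
    simpa [Real.norm_eq_abs, abs_pow] using h
  have hx1 : Integrable (fun x : ℝ => x) μ := by
    simpa using hxj 1 (by norm_num)
  have hx2 : Integrable (fun x : ℝ => x ^ 2) μ := hxj 2 le_rfl
  have hVpos : 0 < B - A * A := by
    have hfun : (fun x : ℝ => (x - A) ^ 2) = fun x => x ^ 2 - 2 * A * x + A ^ 2 :=
      funext fun x => by ring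
    have hsub : Integrable (fun x : ℝ => x ^ 2 - 2 * A * x) μ := by
      have := hx1.const_mul (2 * A)
      exact hx2.sub this
    have hsq : Integrable (fun x : ℝ => (x - A) ^ 2) μ := by
      rw [hfun]
      exact hsub.add (integrable_const _)
    have hes : ∫ x, (x - A) ^ 2 ∂μ = B - A * A := by
      rw [hfun, integral_add hsub (integrable_const _),
        integral_sub hx2 (hx1.const_mul (2 * A)), integral_const_mul, integral_const]
      simp [← hA_def, ← hB_def]
      ring
    have hnn : 0 ≤ ∫ x, (x - A) ^ 2 ∂μ := integral_nonneg fun x => sq_nonneg _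
    have hne : (∫ x, (x - A) ^ 2 ∂μ) ≠ 0 := by
      intro h0
      have hae := (integral_eq_zero_iff_of_nonneg (fun x => sq_nonneg (x - A)) hsq).mp h0
      have hae' : ∀ᵐ x ∂μ, x = A := by
        filter_upwards [hae] with x hx
        have hx0 : (x - A) ^ 2 = 0 := hx
        have := pow_eq_zero_iff (n := 2) (by norm_num) |>.mp hx0
        linarith [sub_eq_zero.mp this]
      refine hμpt A ?_
      have h2 : μ {x | ¬ x = A} = 0 := ae_iff.mp hae'
      have : ({A}ᶜ : Set ℝ) = {x | ¬ x = A} := by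
        ext y; simp
      rw [this]
      exact h2
    rw [← hes]
    exact lt_of_le_of_ne hnn (Ne.symm hne)
  have hm₀' : deriv (cumulant μ) 0 = m₀ := by
    have := hinv m₀ hm₀
    rwa [hψ₀] at this
  -- ### Complex-analytic side
  set S : Set ℂ := {z : ℂ | |z.re| < 2 * δ} with hS_def
  have hSopen : IsOpen S := isOpen_lt (Complex.continuous_re.abs) continuous_const
  have hGcdiff : DifferentiableOn ℂ (fun z : ℂ => ∫ x, Complex.exp (z * x) ∂μ) S := by
    intro z hz
    have h1 := hasD 0 (by norm_num) z hz
    simp only [pow_zero, mul_one] at h1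
    exact h1.differentiableAt.differentiableWithinAt
  have hGcA : AnalyticOnNhd ℂ (fun z : ℂ => ∫ x, Complex.exp (z * x) ∂μ) S :=
    hGcdiff.analyticOnNhd hSopen
  set T : Set ℂ := S ∩ (fun z : ℂ => ∫ x, Complex.exp (z * x) ∂μ) ⁻¹' {w : ℂ | 0 < w.re}
    with hT_def
  have hTopen : IsOpen T :=
    hGcA.continuousOn.isOpen_inter_preimage hSopen
      (isOpen_lt continuous_const Complex.continuous_re)
  have h0S : (0 : ℂ) ∈ S := by
    simp only [hS_def, Set.mem_setOf_eq, Complex.zero_re, abs_zero]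
    linarith
  have hcast0 : ((0:ℝ):ℂ) = 0 := by norm_num
  have h0T : (0 : ℂ) ∈ T := by
    refine ⟨h0S, ?_⟩
    show 0 < (∫ x, Complex.exp ((0:ℂ) * x) ∂μ).re
    rw [← hcast0, hGcReal 0]
    simp only [Complex.ofReal_re]
    rw [hG0]
    norm_num
  set Kc : ℂ → ℂ := fun z => Complex.log (∫ x, Complex.exp (z * x) ∂μ) with hKc_def
  have hKcA : AnalyticOnNhd ℂ Kc T := by
    intro z hz
    exact AnalyticAt.comp (g := Complex.log)
      (f := fun z : ℂ => ∫ x, Complex.exp (z * x) ∂μ)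
      (analyticAt_clog (Or.inl hz.2)) (hGcA z hz.1)
  set Kc' : ℂ → ℂ := deriv Kc with hKc'_def
  have hKc'A : AnalyticOnNhd ℂ Kc' T := hKcA.deriv
  -- real identification of Kc and Kc'
  have habs_nhds : ∀ θ : ℝ, |θ| < 2 * δ → ∀ᶠ t : ℝ in nhds θ, |t| < 2 * δ := by
    intro θ hθ
    exact (continuous_abs.continuousAt).preimage_mem_nhds (Iio_mem_nhds hθ)
  have hKcReal : ∀ t : ℝ, |t| < 2 * δ → Kc (t:ℂ) = ((cumulant μ t : ℝ) : ℂ) := by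
    intro t ht
    rw [hKc_def]
    show Complex.log (∫ x, Complex.exp ((t:ℂ) * x) ∂μ) = _
    rw [hGcReal t, ← Complex.ofReal_log (hGpos t (lt_trans ht h2δ)).le]
    rfl
  have hKc'Real : ∀ θ : ℝ, |θ| < 2 * δ → (θ:ℂ) ∈ T →
      Kc' (θ:ℂ) = ((deriv (cumulant μ) θ : ℝ) : ℂ) := by
    intro θ hθ hθT
    have hKθ : HasDerivAt Kc (Kc' (θ:ℂ)) (θ:ℂ) := ((hKcA _ hθT).differentiableAt).hasDerivAt
    have h1 : HasDerivAt (fun t : ℝ => Kc (t:ℂ)) (Kc' (θ:ℂ)) θ := hKθ.comp_ofReal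
    have h2 : HasDerivAt (fun t : ℝ => ((cumulant μ t : ℝ) : ℂ))
        ((((∫ x, Real.exp (θ*x) * x ∂μ) / (∫ x, Real.exp (θ*x) ∂μ) : ℝ)) : ℂ) θ :=
      (hcum θ hθ).ofReal_comp
    have hev : (fun t : ℝ => ((cumulant μ t : ℝ) : ℂ)) =ᶠ[nhds θ] fun t : ℝ => Kc (t:ℂ) := by
      filter_upwards [habs_nhds θ hθ] with t ht
      exact (hKcReal t ht).symm
    have h3 : HasDerivAt (fun t : ℝ => Kc (t:ℂ))
        ((((∫ x, Real.exp (θ*x) * x ∂μ) / (∫ x, Real.exp (θ*x) ∂μ) : ℝ)) : ℂ) θ := by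
      refine HasDerivAt.congr_of_eventuallyEq h2 hev.symm
    rw [h1.unique h3, hderivcum θ hθ]
  have h0T' : ((0:ℝ):ℂ) ∈ T := by rw [hcast0]; exact h0T
  have hKc'0 : Kc' 0 = ((m₀ : ℝ) : ℂ) := by
    have h := hKc'Real 0 h0lt h0T'
    rw [hm₀'] at h
    rwa [hcast0] at h
  have hVne : ((B - A*A : ℝ) : ℂ) ≠ 0 := by
    exact_mod_cast hVpos.ne'
  have hTn0 : ∀ᶠ t : ℝ in nhds (0:ℝ), (t:ℂ) ∈ T :=
    (Complex.continuous_ofReal.continuousAt).preimage_mem_nhds (hTopen.mem_nhds h0T')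
  have hKc'deriv0 : HasDerivAt Kc' ((B - A*A : ℝ) : ℂ) 0 := by
    have hd : HasDerivAt Kc' (deriv Kc' 0) 0 := ((hKc'A 0 h0T).differentiableAt).hasDerivAt
    have hd' : HasDerivAt Kc' (deriv Kc' 0) ((0:ℝ):ℂ) := by rwa [hcast0]
    have h1 : HasDerivAt (fun t : ℝ => Kc' (t:ℂ)) (deriv Kc' 0) 0 := hd'.comp_ofReal
    have h2' := hc'deriv.ofReal_comp
    have h2 : HasDerivAt (fun t : ℝ => ((deriv (cumulant μ) t : ℝ) : ℂ)) ((B - A*A : ℝ):ℂ) 0 := by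
      refine h2'.congr_of_eventuallyEq ?_
      filter_upwards [habs_nhds 0 h0lt] with t ht
      rw [hderivcum t ht]
    have hev3 : (fun t : ℝ => ((deriv (cumulant μ) t : ℝ):ℂ)) =ᶠ[nhds (0:ℝ)]
        fun t : ℝ => Kc' (t:ℂ) := by
      filter_upwards [hTn0, habs_nhds 0 h0lt] with t ht1 ht2
      exact (hKc'Real t ht2 ht1).symm
    have h4 : HasDerivAt (fun t : ℝ => Kc' (t:ℂ)) ((B - A*A:ℝ):ℂ) 0 :=
      h2.congr_of_eventuallyEq hev3.symm
    have := h1.unique h4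
    rwa [this] at hd
  -- ### Inverse function theorem
  have hstrict : HasStrictDerivAt Kc' ((B - A*A : ℝ):ℂ) 0 := by
    have hc1 : ContDiffAt ℂ 1 Kc' 0 := (hKc'A 0 h0T).contDiffAt
    have := hc1.hasStrictDerivAt one_ne_zero
    rwa [hKc'deriv0.deriv] at this
  have hfd : HasStrictFDerivAt Kc'
      ((ContinuousLinearEquiv.unitsEquivAut ℂ (Units.mk0 _ hVne)) : ℂ →L[ℂ] ℂ) 0 :=
    hstrict.hasStrictFDerivAt_equiv hVne
  set PH : OpenPartialHomeomorph ℂ ℂ := hfd.toOpenPartialHomeomorph Kc' with hPH_def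
  have hPHsource : (0:ℂ) ∈ PH.source := hfd.mem_toOpenPartialHomeomorph_source
  have hPHcoe : (PH : ℂ → ℂ) = Kc' := hfd.toOpenPartialHomeomorph_coe
  obtain ⟨p, hp⟩ := hKc'A 0 h0T
  have hpd : (p 1 fun _ => 1) = ((B - A*A : ℝ) : ℂ) := by
    have h := hp.deriv
    rw [hKc'deriv0.deriv] at h
    exact h.symm
  have hp1 : p 1 = (continuousMultilinearCurryFin1 ℂ ℂ ℂ).symm
      ((ContinuousLinearEquiv.unitsEquivAut ℂ (Units.mk0 _ hVne)) : ℂ →L[ℂ] ℂ) := by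
    refine ContinuousMultilinearMap.ext fun m => ?_
    have hm : (fun _ : Fin 1 => m 0) = m := by
      funext j
      congr 1
      exact Subsingleton.elim 0 j
    have hL : p 1 (fun _ : Fin 1 => m 0) = m 0 • (p 1 fun _ => (1:ℂ)) := by
      have h := (p 1).map_smul_univ (fun _ : Fin 1 => m 0) (fun _ => (1:ℂ))
      simpa using h
    rw [← hm, hL, hpd]
    simp [ContinuousLinearEquiv.unitsEquivAut_apply, smul_eq_mul, mul_comm]
  have hpPH : HasFPowerSeriesAt (⇑PH) p 0 := by rw [hPHcoe]; exact hp
  have hsymm := PH.hasFPowerSeriesAt_symm hPHsource hpPH hp1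
  have hPH0 : PH 0 = ((m₀:ℝ):ℂ) := by
    rw [show (PH : ℂ → ℂ) 0 = Kc' 0 from congrFun hPHcoe 0, hKc'0]
  have hΦA : AnalyticAt ℂ (⇑PH.symm) ((m₀:ℝ):ℂ) := ⟨_, hPH0 ▸ hsymm⟩
  -- ### ψ matches the local inverse near m₀
  have hψcont : ContinuousAt ψ m₀ := hψ.continuousOn.continuousAt (hM.mem_nhds hm₀)
  have hψev : ∀ᶠ m in nhds m₀, m ∈ M ∧ |ψ m| < 2 * δ ∧ ((ψ m : ℝ):ℂ) ∈ T ∧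
      ((ψ m : ℝ):ℂ) ∈ PH.source := by
    have h1 : ∀ᶠ m in nhds m₀, m ∈ M := hM.mem_nhds hm₀
    have h2 : ∀ᶠ m in nhds m₀, |ψ m| < 2 * δ := by
      have h2' : ∀ᶠ u : ℝ in nhds (ψ m₀), |u| < 2*δ := by rw [hψ₀]; exact habs_nhds 0 h0lt
      exact hψcont.tendsto.eventually h2'
    have h3 : ∀ᶠ m in nhds m₀, ((ψ m:ℝ):ℂ) ∈ T := by
      have h3' : ∀ᶠ u : ℝ in nhds (ψ m₀), ((u:ℝ):ℂ) ∈ T := by rw [hψ₀]; exact hTn0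
      exact hψcont.tendsto.eventually h3'
    have h4 : ∀ᶠ m in nhds m₀, ((ψ m:ℝ):ℂ) ∈ PH.source := by
      have h5 : ∀ᶠ u : ℝ in nhds (0:ℝ), ((u:ℝ):ℂ) ∈ PH.source :=
        (Complex.continuous_ofReal.continuousAt).preimage_mem_nhds
          (PH.open_source.mem_nhds (by rwa [hcast0]))
      have h6 : ∀ᶠ u : ℝ in nhds (ψ m₀), ((u:ℝ):ℂ) ∈ PH.source := by rw [hψ₀]; exact h5
      exact hψcont.tendsto.eventually h6
    filter_upwards [h1, h2, h3, h4] with m a b c d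
    exact ⟨a, b, c, d⟩
  have hmatch : ∀ᶠ m in nhds m₀, PH.symm ((m:ℝ):ℂ) = ((ψ m : ℝ):ℂ) := by
    filter_upwards [hψev] with m hm
    obtain ⟨hmM, hm2, hmT, hmsrc⟩ := hm
    have hKψ : Kc' ((ψ m:ℝ):ℂ) = ((m:ℝ):ℂ) := by
      rw [hKc'Real (ψ m) hm2 hmT, hinv m hmM]
    have hli := PH.left_inv hmsrc
    rw [show PH ((ψ m:ℝ):ℂ) = Kc' ((ψ m:ℝ):ℂ) from congrFun hPHcoe _, hKψ] at hli
    exact hli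
  -- ### A good closed ball around m₀ in ℂ
  obtain ⟨p2, r2, hpr2⟩ := hΦA
  have hΦdiff : DifferentiableOn ℂ (⇑PH.symm) (EMetric.ball ((m₀:ℝ):ℂ) r2) :=
    hpr2.differentiableOn
  have hΦm₀ : PH.symm ((m₀:ℝ):ℂ) = 0 := by rw [← hPH0]; exact PH.left_inv hPHsource
  set W : Set ℂ := EMetric.ball ((m₀:ℝ):ℂ) r2 ∩
      (⇑PH.symm) ⁻¹' ({w : ℂ | ‖w‖ < δ} ∩ T) with hW_def
  have hWopen : IsOpen W :=
    hΦdiff.continuousOn.isOpen_inter_preimage EMetric.isOpen_ball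
      ((isOpen_lt continuous_norm continuous_const).inter hTopen)
  have hm₀W : ((m₀:ℝ):ℂ) ∈ W := by
    refine ⟨EMetric.mem_ball_self hpr2.r_pos, ?_⟩
    rw [Set.mem_preimage, hΦm₀]
    exact ⟨by simpa using hδ, h0T⟩
  obtain ⟨R₀, hR₀pos, hR₀sub⟩ := (Metric.nhds_basis_closedBall.mem_iff).mp
    (hWopen.mem_nhds hm₀W)
  have hsubW : Metric.closedBall ((m₀:ℝ):ℂ) R₀ ⊆ W := hR₀sub
  have hΦdiff' : DifferentiableOn ℂ (⇑PH.symm) (Metric.closedBall ((m₀:ℝ):ℂ) R₀) :=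
    hΦdiff.mono fun z hz => (hsubW hz).1
  have hKΦdiff : ∀ x : ℝ, DifferentiableOn ℂ
      (fun z => Complex.exp ((x:ℂ) * PH.symm z - Kc (PH.symm z)))
      (Metric.closedBall ((m₀:ℝ):ℂ) R₀) := by
    intro x
    apply DifferentiableOn.cexp
    apply DifferentiableOn.sub
    · exact hΦdiff'.const_mul _
    · intro z hz
      exact ((hKcA _ (hsubW hz).2.2).differentiableAt).comp_differentiableWithinAt z
        (hΦdiff' z hz)
  have hKΦcont : ContinuousOn (fun z => Kc (PH.symm z)) (Metric.closedBall ((m₀:ℝ):ℂ) R₀) := by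
    intro z hz
    exact ((hKcA _ (hsubW hz).2.2).continuousAt).comp_continuousWithinAt
      ((hΦdiff' z hz).continuousWithinAt)
  obtain ⟨D, hD⟩ := (isCompact_closedBall ((m₀:ℝ):ℂ) R₀).exists_bound_of_continuousOn hKΦcont
  have hDnn : 0 ≤ D :=
    le_trans (norm_nonneg _) (hD _ (Metric.mem_closedBall_self hR₀pos.le))
  -- ### Uniform bound for the densities on the closed ball
  have hFb : ∀ x : ℝ, ∀ z ∈ Metric.closedBall ((m₀:ℝ):ℂ) R₀,
      ‖Complex.exp ((x:ℂ) * PH.symm z - Kc (PH.symm z))‖ ≤ Real.exp (δ * |x| + D) := by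
    intro x z hz
    rw [Complex.norm_exp]
    apply Real.exp_le_exp.2
    have h1 : ((x:ℂ) * PH.symm z - Kc (PH.symm z)).re
        = x * (PH.symm z).re - (Kc (PH.symm z)).re := by
      simp [Complex.sub_re, Complex.mul_re]
    rw [h1]
    have h2 : x * (PH.symm z).re ≤ δ * |x| := by
      calc x * (PH.symm z).re ≤ |x * (PH.symm z).re| := le_abs_self _
        _ = |x| * |(PH.symm z).re| := abs_mul _ _
        _ ≤ |x| * ‖PH.symm z‖ := by
            refine mul_le_mul_of_nonneg_left ?_ (abs_nonneg x)
            exact Complex.abs_re_le_norm _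
        _ ≤ |x| * δ := mul_le_mul_of_nonneg_left ((hsubW hz).2.1).le (abs_nonneg x)
        _ = δ * |x| := mul_comm _ _
    have h3 : -(Kc (PH.symm z)).re ≤ D := by
      calc -(Kc (PH.symm z)).re ≤ |(Kc (PH.symm z)).re| := neg_le_abs _
        _ ≤ ‖Kc (PH.symm z)‖ := by
            exact Complex.abs_re_le_norm _
        _ ≤ D := hD z hz
    linarith
  -- ### Power series and Cauchy estimates
  set R : NNReal := ⟨R₀, hR₀pos.le⟩ with hR_def
  have hps : ∀ x : ℝ, HasFPowerSeriesOnBall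
      (fun z => Complex.exp ((x:ℂ) * PH.symm z - Kc (PH.symm z)))
      (cauchyPowerSeries (fun z => Complex.exp ((x:ℂ) * PH.symm z - Kc (PH.symm z)))
        ((m₀:ℝ):ℂ) (R:ℝ)) ((m₀:ℝ):ℂ) R :=
    fun x => (hKΦdiff x).hasFPowerSeriesOnBall hR₀pos
  have hcoef : ∀ x : ℝ, ∀ n : ℕ,
      ‖cauchyPowerSeries (fun z => Complex.exp ((x:ℂ) * PH.symm z - Kc (PH.symm z)))
        ((m₀:ℝ):ℂ) (R:ℝ) n‖ ≤ Real.exp (δ * |x| + D) * (R₀⁻¹) ^ n := by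
    intro x n
    have h1 := norm_cauchyPowerSeries_le
      (fun z => Complex.exp ((x:ℂ) * PH.symm z - Kc (PH.symm z))) ((m₀:ℝ):ℂ) (R:ℝ) n
    have hcont2 : Continuous fun θ : ℝ =>
        ‖(fun z => Complex.exp ((x:ℂ) * PH.symm z - Kc (PH.symm z)))
          (circleMap ((m₀:ℝ):ℂ) (R:ℝ) θ)‖ := by
      refine ((hKΦdiff x).continuousOn.comp_continuous (continuous_circleMap _ _) ?_).norm
      intro θ
      exact circleMap_mem_closedBall _ hR₀pos.le _
    have hIb : (∫ θ : ℝ in (0)..2*Real.pi,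
        ‖(fun z => Complex.exp ((x:ℂ) * PH.symm z - Kc (PH.symm z)))
          (circleMap ((m₀:ℝ):ℂ) (R:ℝ) θ)‖)
        ≤ 2*Real.pi * Real.exp (δ * |x| + D) := by
      have hle := intervalIntegral.integral_mono_on (μ := MeasureTheory.volume)
        (a := 0) (b := 2 * Real.pi)
        (f := fun θ : ℝ => ‖(fun z => Complex.exp ((x:ℂ) * PH.symm z - Kc (PH.symm z)))
          (circleMap ((m₀:ℝ):ℂ) (R:ℝ) θ)‖)
        (g := fun _ : ℝ => Real.exp (δ * |x| + D))
        (by linarith [Real.pi_pos]) (hcont2.intervalIntegrable _ _) intervalIntegrable_const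
        (fun θ _ => hFb x _ (circleMap_mem_closedBall _ hR₀pos.le _))
      simp only [intervalIntegral.integral_const, sub_zero, smul_eq_mul] at hle
      exact hle
    have hRabs : |(R:ℝ)| = R₀ := by
      rw [hR_def]
      exact abs_of_nonneg hR₀pos.le
    refine h1.trans ?_
    rw [hRabs]
    have h2 : ((2*Real.pi)⁻¹ * (2*Real.pi * Real.exp (δ*|x|+D))) * R₀⁻¹ ^ n
        = Real.exp (δ * |x| + D) * R₀⁻¹ ^ n := by
      have hpi : (2 * Real.pi) ≠ 0 := by positivity
      field_simp
    rw [← h2]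
    refine mul_le_mul_of_nonneg_right (mul_le_mul_of_nonneg_left hIb (by positivity))
      (by positivity)
  -- ### The pointwise derivative bound
  have hFanal : ∀ x : ℝ, AnalyticOnNhd ℂ
      (fun z => Complex.exp ((x:ℂ) * PH.symm z - Kc (PH.symm z)))
      (Metric.ball ((m₀:ℝ):ℂ) R₀) :=
    fun x => ((hKΦdiff x).mono Metric.ball_subset_closedBall).analyticOnNhd Metric.isOpen_ball
  have hkey : ∀ (x : ℝ) (n : ℕ),
      |iteratedDerivWithin n (fun m' => nefDensity μ ψ x m') M m₀|
        ≤ (n.factorial : ℝ) * Real.exp (δ * |x| + D) * (R₀⁻¹) ^ n := by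
    intro x n
    -- pass to the unrestricted derivative
    have e1 : iteratedDerivWithin n (fun m' => nefDensity μ ψ x m') M m₀
        = iteratedDeriv n (fun m' => nefDensity μ ψ x m') m₀ := by
      rw [iteratedDerivWithin_eq_iteratedFDerivWithin,
        iteratedFDerivWithin_of_isOpen n hM hm₀, ← iteratedDeriv_eq_iteratedFDeriv]
    -- the complexified function agrees with the real one near m₀
    have hev : (fun t : ℝ => ((nefDensity μ ψ x t : ℝ) : ℂ)) =ᶠ[nhds m₀]
        (fun t : ℝ => Complex.exp ((x:ℂ) * PH.symm (t:ℂ) - Kc (PH.symm (t:ℂ)))) := by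
      filter_upwards [hψev, hmatch] with m hm hmeq
      obtain ⟨hmM, hm2, hmT, hmsrc⟩ := hm
      rw [hmeq, hKcReal (ψ m) hm2, nefDensity]
      push_cast
      congr 1
      ring
    have e2 : iteratedDeriv n (fun t : ℝ => ((nefDensity μ ψ x t : ℝ) : ℂ)) m₀
        = iteratedDeriv n
          (fun t : ℝ => Complex.exp ((x:ℂ) * PH.symm (t:ℂ) - Kc (PH.symm (t:ℂ)))) m₀ :=
      hev.iteratedDeriv_eq n
    have e3 : iteratedDeriv n
          (fun t : ℝ => Complex.exp ((x:ℂ) * PH.symm (t:ℂ) - Kc (PH.symm (t:ℂ)))) m₀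
        = iteratedDeriv n
          (fun z : ℂ => Complex.exp ((x:ℂ) * PH.symm z - Kc (PH.symm z))) ((m₀:ℝ):ℂ) :=
      iteratedDeriv_comp_ofReal_of_analytic Metric.isOpen_ball (hFanal x) n
        (Metric.mem_ball_self hR₀pos)
    have e4 : ((iteratedDeriv n (fun m' => nefDensity μ ψ x m') m₀ : ℝ) : ℂ)
        = iteratedDeriv n
          (fun z : ℂ => Complex.exp ((x:ℂ) * PH.symm z - Kc (PH.symm z))) ((m₀:ℝ):ℂ) := by
      rw [← e3, ← e2]
      exact (congrFun (iteratedDeriv_ofReal_comp (fun m' => nefDensity μ ψ x m') n) m₀).symm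
    -- Cauchy estimate via the power series
    have e5 := (hps x).factorial_smul 1 n
    have e6 : iteratedDeriv n
        (fun z : ℂ => Complex.exp ((x:ℂ) * PH.symm z - Kc (PH.symm z))) ((m₀:ℝ):ℂ)
        = iteratedFDeriv ℂ n
          (fun z : ℂ => Complex.exp ((x:ℂ) * PH.symm z - Kc (PH.symm z))) ((m₀:ℝ):ℂ)
          (fun _ => 1) := iteratedDeriv_eq_iteratedFDeriv
    have e7 : |iteratedDerivWithin n (fun m' => nefDensity μ ψ x m') M m₀|
        = ‖(n.factorial) • (cauchyPowerSeries
            (fun z => Complex.exp ((x:ℂ) * PH.symm z - Kc (PH.symm z)))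
            ((m₀:ℝ):ℂ) (R:ℝ) n (fun _ => 1))‖ := by
      rw [e1, e5, ← e6, ← e4, Complex.norm_real, Real.norm_eq_abs]
    rw [e7]
    have e8 : ‖(n.factorial) • (cauchyPowerSeries
          (fun z => Complex.exp ((x:ℂ) * PH.symm z - Kc (PH.symm z)))
          ((m₀:ℝ):ℂ) (R:ℝ) n (fun _ => 1))‖
        = (n.factorial : ℝ) * ‖cauchyPowerSeries
          (fun z => Complex.exp ((x:ℂ) * PH.symm z - Kc (PH.symm z)))
          ((m₀:ℝ):ℂ) (R:ℝ) n (fun _ => 1)‖ := by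
      rw [← Nat.cast_smul_eq_nsmul ℂ, norm_smul]
      simp
    rw [e8]
    have e9 : ‖cauchyPowerSeries
          (fun z => Complex.exp ((x:ℂ) * PH.symm z - Kc (PH.symm z)))
          ((m₀:ℝ):ℂ) (R:ℝ) n (fun _ => 1)‖
        ≤ ‖cauchyPowerSeries
          (fun z => Complex.exp ((x:ℂ) * PH.symm z - Kc (PH.symm z)))
          ((m₀:ℝ):ℂ) (R:ℝ) n‖ := by
      have := (cauchyPowerSeries
          (fun z => Complex.exp ((x:ℂ) * PH.symm z - Kc (PH.symm z)))
          ((m₀:ℝ):ℂ) (R:ℝ) n).le_opNorm (fun _ => 1)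
      simpa using this
    calc (n.factorial : ℝ) * ‖cauchyPowerSeries
          (fun z => Complex.exp ((x:ℂ) * PH.symm z - Kc (PH.symm z)))
          ((m₀:ℝ):ℂ) (R:ℝ) n (fun _ => 1)‖
        ≤ (n.factorial : ℝ) * (Real.exp (δ * |x| + D) * (R₀⁻¹) ^ n) := by
          refine mul_le_mul_of_nonneg_left (e9.trans (hcoef x n)) (by positivity)
      _ = (n.factorial : ℝ) * Real.exp (δ * |x| + D) * (R₀⁻¹) ^ n := by ring
  -- ### Conclusion: summability
  have hint2δ : Integrable (fun x => Real.exp (2 * δ * |x|)) μ :=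
    hintabs (2 * δ) (by positivity) (by rw [hδ_def]; linarith)
  set Cb : ℝ := Real.exp (2 * D) * ∫ x, Real.exp (2 * δ * |x|) ∂μ with hCb_def
  have hCbnn : 0 ≤ Cb := by
    refine mul_nonneg (Real.exp_pos _).le (integral_nonneg fun x => (Real.exp_pos _).le)
  refine ⟨R₀ / 2, by positivity, ?_⟩
  have hterm : ∀ n : ℕ,
      Real.sqrt (∫ x, (iteratedDerivWithin n (fun m' => nefDensity μ ψ x m') M m₀) ^ 2 ∂μ)
        * (R₀ / 2) ^ n / n.factorial ≤ Real.sqrt Cb * (1/2 : ℝ) ^ n := by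
    intro n
    have hIb2 : Integrable
        (fun x => ((n.factorial : ℝ) * Real.exp (δ * |x| + D) * (R₀⁻¹) ^ n) ^ 2) μ := by
      have hfun : (fun x => ((n.factorial : ℝ) * Real.exp (δ * |x| + D) * (R₀⁻¹) ^ n) ^ 2)
          = fun x => ((n.factorial : ℝ) ^ 2 * Real.exp (2 * D) * ((R₀⁻¹) ^ n) ^ 2)
            * Real.exp (2 * δ * |x|) := by
        funext x
        have h2 : Real.exp (δ * |x| + D) ^ 2 = Real.exp (2 * δ * |x|) * Real.exp (2 * D) := by
          rw [← Real.exp_nat_mul, show ((2:ℕ):ℝ) * (δ * |x| + D) = 2 * δ * |x| + 2 * D by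
            push_cast; ring, Real.exp_add]
        have h3 : ((n.factorial : ℝ) * Real.exp (δ * |x| + D) * (R₀⁻¹) ^ n) ^ 2
            = ((n.factorial : ℝ) ^ 2 * ((R₀⁻¹) ^ n) ^ 2) * Real.exp (δ * |x| + D) ^ 2 := by
          ring
        rw [h3, h2]
        ring
      rw [hfun]
      exact hint2δ.const_mul _
    have hmono : (∫ x, (iteratedDerivWithin n (fun m' => nefDensity μ ψ x m') M m₀) ^ 2 ∂μ)
        ≤ ∫ x, ((n.factorial : ℝ) * Real.exp (δ * |x| + D) * (R₀⁻¹) ^ n) ^ 2 ∂μ := by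
      refine integral_mono_of_nonneg (ae_of_all _ fun x => sq_nonneg _) hIb2
        (ae_of_all _ fun x => ?_)
      have h := hkey x n
      calc (iteratedDerivWithin n (fun m' => nefDensity μ ψ x m') M m₀) ^ 2
          = |iteratedDerivWithin n (fun m' => nefDensity μ ψ x m') M m₀| ^ 2 := (sq_abs _).symm
        _ ≤ ((n.factorial : ℝ) * Real.exp (δ * |x| + D) * (R₀⁻¹) ^ n) ^ 2 := by
            exact pow_le_pow_left₀ (abs_nonneg _) h 2
    have hval : (∫ x, ((n.factorial : ℝ) * Real.exp (δ * |x| + D) * (R₀⁻¹) ^ n) ^ 2 ∂μ)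
        = ((n.factorial : ℝ) * (R₀⁻¹) ^ n) ^ 2 * Cb := by
      have hfun : (fun x => ((n.factorial : ℝ) * Real.exp (δ * |x| + D) * (R₀⁻¹) ^ n) ^ 2)
          = fun x => (((n.factorial : ℝ) * (R₀⁻¹) ^ n) ^ 2 * Real.exp (2 * D))
            * Real.exp (2 * δ * |x|) := by
        funext x
        have h2 : Real.exp (δ * |x| + D) ^ 2 = Real.exp (2 * δ * |x|) * Real.exp (2 * D) := by
          rw [← Real.exp_nat_mul, show ((2:ℕ):ℝ) * (δ * |x| + D) = 2 * δ * |x| + 2 * D by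
            push_cast; ring, Real.exp_add]
        have h3 : ((n.factorial : ℝ) * Real.exp (δ * |x| + D) * (R₀⁻¹) ^ n) ^ 2
            = ((n.factorial : ℝ) * (R₀⁻¹) ^ n) ^ 2 * Real.exp (δ * |x| + D) ^ 2 := by
          ring
        rw [h3, h2]
        ring
      rw [hfun, integral_const_mul, hCb_def]
      ring
    have hsqrt : Real.sqrt (∫ x,
          (iteratedDerivWithin n (fun m' => nefDensity μ ψ x m') M m₀) ^ 2 ∂μ)
        ≤ ((n.factorial : ℝ) * (R₀⁻¹) ^ n) * Real.sqrt Cb := by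
      have h1 := Real.sqrt_le_sqrt (hmono.trans hval.le)
      refine h1.trans ?_
      rw [Real.sqrt_mul (sq_nonneg _), Real.sqrt_sq (by positivity)]
    calc Real.sqrt (∫ x,
          (iteratedDerivWithin n (fun m' => nefDensity μ ψ x m') M m₀) ^ 2 ∂μ)
          * (R₀ / 2) ^ n / n.factorial
        ≤ (((n.factorial : ℝ) * (R₀⁻¹) ^ n) * Real.sqrt Cb)
          * (R₀ / 2) ^ n / n.factorial := by
          gcongr
      _ = Real.sqrt Cb * ((R₀⁻¹) ^ n * (R₀ / 2) ^ n) := by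
          have hpos : ((n.factorial : ℝ)) ≠ 0 := by exact_mod_cast n.factorial_ne_zero
          field_simp
      _ = Real.sqrt Cb * (1/2 : ℝ) ^ n := by
          rw [← mul_pow]
          congr 2
          field_simp
  refine Summable.of_nonneg_of_le (fun n => by positivity) hterm ?_
  exact (summable_geometric_two).mul_left _
end

section
/- Suppose the NEF F has cubic variance function V_F(m) = a₃(m−m₀)³ + a₂(m−m₀)² + a₁(m−m₀) + a₀ where m₀ is the mean of μ ∈ F. Then the Feinsilver polynomials P_n satisfy the four-term recurrence x P_n(x) = a₃ n(n−1)(n−2) P_{n−2}(x) + n(a₂(n−1)+1) P_{n−1}(x) + (n a₁ + m₀) P_n(x) + a₀ P_{n+1}(x) for all n ≥ 2. -/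
open MeasureTheory Real

lemma exp_le_exp_add_exp_s13 {s t u x : ℝ} (hst : s ≤ t) (htu : t ≤ u) :
    Real.exp (t * x) ≤ Real.exp (s * x) + Real.exp (u * x) := by
  rcases le_total 0 x with hx | hx
  · have h1 : t * x ≤ u * x := mul_le_mul_of_nonneg_right htu hx
    have h2 := Real.exp_le_exp.2 h1
    nlinarith [Real.exp_pos (s * x)]
  · have h1 : t * x ≤ s * x := mul_le_mul_of_nonpos_right hst hx
    have h2 := Real.exp_le_exp.2 h1
    nlinarith [Real.exp_pos (u * x)]

lemma abs_le_exps {δ : ℝ} (hδ : 0 < δ) (x : ℝ) :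
    |x| ≤ δ⁻¹ * (Real.exp (δ * x) + Real.exp (-(δ * x))) := by
  have h1 : δ * |x| ≤ Real.exp (δ * |x|) :=
    le_trans (by linarith) (Real.add_one_le_exp _)
  have h2 : Real.exp (δ * |x|) ≤ Real.exp (δ * x) + Real.exp (-(δ * x)) := by
    rcases abs_cases x with ⟨he, _⟩ | ⟨he, _⟩
    · rw [he]; nlinarith [Real.exp_pos (-(δ * x))]
    · rw [he, mul_neg]; nlinarith [Real.exp_pos (δ * x)]
  have h3 : δ * |x| ≤ Real.exp (δ * x) + Real.exp (-(δ * x)) := h1.trans h2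
  calc |x| = δ⁻¹ * (δ * |x|) := by field_simp
  _ ≤ _ := mul_le_mul_of_nonneg_left h3 (by positivity)

/-- The integral `θ ↦ ∫ exp (θ x) dμ` is real-analytic on the interior of the Laplace
domain, by restriction of the complex Laplace transform. -/
lemma analyticAt_integral_exp (μ : Measure ℝ) [IsProbabilityMeasure μ] {θ : ℝ}
    (hθ : θ ∈ interior (laplaceDomain μ)) :
    AnalyticAt ℝ (fun t : ℝ => ∫ x, Real.exp (t * x) ∂μ) θ := by
  set F : ℂ → ℂ := fun z => ∫ x : ℝ, Complex.exp (z * x) ∂μ with hFdef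
  set S : Set ℂ := Complex.re ⁻¹' (interior (laplaceDomain μ)) with hSdef
  have hSopen : IsOpen S := isOpen_interior.preimage Complex.continuous_re
  have hdiff : DifferentiableOn ℂ F S := by
    intro z₀ hz₀
    obtain ⟨ε, hε, hball⟩ := Metric.isOpen_iff.1 isOpen_interior _ hz₀
    set t₀ : ℝ := z₀.re
    set δ : ℝ := ε / 3 with hδdef
    have hδ : 0 < δ := by positivity
    have hint : ∀ s : ℝ, |s - t₀| ≤ 2 * δ → Integrable (fun x => Real.exp (s * x)) μ := by
      intro s hs
      have : s ∈ Metric.ball t₀ ε := by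
        rw [Metric.mem_ball, Real.dist_eq]
        calc |s - t₀| ≤ 2 * δ := hs
        _ < ε := by rw [hδdef]; linarith
      have hmemdom : s ∈ laplaceDomain μ := interior_subset (hball this)
      exact hmemdom
    set lo : ℝ := t₀ - 2 * δ
    set hi : ℝ := t₀ + 2 * δ
    have hloI : Integrable (fun x => Real.exp (lo * x)) μ := hint lo (by
      rw [show lo - t₀ = -(2 * δ) by ring, abs_neg, abs_of_nonneg (by linarith)])
    have hhiI : Integrable (fun x => Real.exp (hi * x)) μ := hint hi (by
      rw [show hi - t₀ = 2 * δ by ring, abs_of_nonneg (by linarith)])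
    set bound : ℝ → ℝ := fun x => δ⁻¹ * 2 * (Real.exp (lo * x) + Real.exp (hi * x)) with hbdef
    have hboundI : Integrable bound μ := ((hloI.add hhiI).const_mul _)
    have hmono : ∀ s x : ℝ, lo ≤ s → s ≤ hi →
        Real.exp (s * x) ≤ Real.exp (lo * x) + Real.exp (hi * x) := fun s x h1 h2 =>
      exp_le_exp_add_exp_s13 h1 h2
    have key := hasDerivAt_integral_of_dominated_loc_of_deriv_le (μ := μ)
      (F := fun (z : ℂ) (x : ℝ) => Complex.exp (z * x))
      (F' := fun (z : ℂ) (x : ℝ) => Complex.exp (z * x) * x)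
      (x₀ := z₀) (bound := bound) (Metric.ball_mem_nhds z₀ hδ) ?_ ?_ ?_ ?_ hboundI ?_
    · exact (key.2.differentiableAt).differentiableWithinAt
    · filter_upwards with z
      exact (Complex.continuous_exp.comp
        (continuous_const.mul Complex.continuous_ofReal)).aestronglyMeasurable
    · apply Integrable.mono' ((hloI.add hhiI))
      · exact (Complex.continuous_exp.comp
          (continuous_const.mul Complex.continuous_ofReal)).aestronglyMeasurable
      · filter_upwards with x
        have : ‖Complex.exp (z₀ * x)‖ = Real.exp (t₀ * x) := by
          rw [Complex.norm_exp]
          congr 1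
          simp [Complex.mul_re, t₀]
        rw [this]
        exact hmono t₀ x (by simp [lo]; linarith) (by simp [hi]; linarith)
    · exact ((Complex.continuous_exp.comp
        (continuous_const.mul Complex.continuous_ofReal)).mul
        Complex.continuous_ofReal).aestronglyMeasurable
    · filter_upwards with x
      intro z hz
      have hrez : |z.re - t₀| ≤ δ := by
        have := Complex.abs_re_le_norm (z - z₀)
        have hzd : ‖z - z₀‖ ≤ δ := by
          rw [← Complex.dist_eq] at *
          exact le_of_lt (by simpa [Metric.mem_ball] using hz)
        simpa [Complex.sub_re] using le_trans this hzd
      have hnorm : ‖Complex.exp (z * x) * x‖ = Real.exp (z.re * x) * |x| := by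
        rw [norm_mul, Complex.norm_exp, Complex.norm_real,
          Real.norm_eq_abs]
        congr 2
        simp [Complex.mul_re]
      rw [hnorm]
      have h1 : Real.exp (z.re * x) * |x|
          ≤ Real.exp (z.re * x) * (δ⁻¹ * (Real.exp (δ * x) + Real.exp (-(δ * x)))) :=
        mul_le_mul_of_nonneg_left (abs_le_exps hδ x) (Real.exp_pos _).le
      have h2 : Real.exp (z.re * x) * (δ⁻¹ * (Real.exp (δ * x) + Real.exp (-(δ * x))))
          = δ⁻¹ * (Real.exp ((z.re + δ) * x) + Real.exp ((z.re - δ) * x)) := by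
        have e1 : Real.exp (z.re * x) * Real.exp (δ * x) = Real.exp ((z.re + δ) * x) := by
          rw [← Real.exp_add]; ring_nf
        have e2 : Real.exp (z.re * x) * Real.exp (-(δ * x)) = Real.exp ((z.re - δ) * x) := by
          rw [← Real.exp_add]; ring_nf
        calc Real.exp (z.re * x) * (δ⁻¹ * (Real.exp (δ * x) + Real.exp (-(δ * x))))
            = δ⁻¹ * (Real.exp (z.re * x) * Real.exp (δ * x)
              + Real.exp (z.re * x) * Real.exp (-(δ * x))) := by ring
        _ = _ := by rw [e1, e2]
      have h3 : Real.exp ((z.re + δ) * x) ≤ Real.exp (lo * x) + Real.exp (hi * x) := by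
        apply hmono _ x
        · simp only [lo]; cases abs_le.1 hrez; linarith
        · simp only [hi]; cases abs_le.1 hrez; linarith
      have h4 : Real.exp ((z.re - δ) * x) ≤ Real.exp (lo * x) + Real.exp (hi * x) := by
        apply hmono _ x
        · simp only [lo]; cases abs_le.1 hrez; linarith
        · simp only [hi]; cases abs_le.1 hrez; linarith
      calc Real.exp (z.re * x) * |x|
          ≤ δ⁻¹ * (Real.exp ((z.re + δ) * x) + Real.exp ((z.re - δ) * x)) := by
            rw [← h2]; exact h1
        _ ≤ bound x := by
            rw [hbdef]
            have : (0:ℝ) ≤ δ⁻¹ := by positivity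
            simp only []
            nlinarith [h3, h4]
    · filter_upwards with x
      intro z hz
      have : HasDerivAt (fun z : ℂ => z * (x:ℂ)) (x:ℂ) z := by
        simpa using (hasDerivAt_id z).mul_const (x:ℂ)
      exact this.cexp
  have hθS : (θ : ℂ) ∈ S := by simp [hSdef, hθ]
  have han : AnalyticAt ℂ F (θ : ℂ) := hdiff.analyticAt (hSopen.mem_nhds hθS)
  have hre : AnalyticAt ℝ (fun t : ℝ => (F (t : ℂ)).re) θ := by
    have h1 : AnalyticAt ℝ (Complex.ofRealCLM : ℝ → ℂ) θ := Complex.ofRealCLM.analyticAt θ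
    have h2 : AnalyticAt ℝ F ((Complex.ofRealCLM : ℝ → ℂ) θ) := by
      simpa using han.restrictScalars
    have h3 : AnalyticAt ℝ (F ∘ (Complex.ofRealCLM : ℝ → ℂ)) θ := h2.comp h1
    have h4 : AnalyticAt ℝ (Complex.reCLM : ℂ → ℝ)
        ((F ∘ (Complex.ofRealCLM : ℝ → ℂ)) θ) := Complex.reCLM.analyticAt _
    exact h4.comp h3
  have heq : (fun t : ℝ => (F (t : ℂ)).re) = fun t : ℝ => ∫ x, Real.exp (t * x) ∂μ := by
    funext t
    have : F (t : ℂ) = ((∫ x, Real.exp (t * x) ∂μ : ℝ) : ℂ) := by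
      show (∫ x : ℝ, Complex.exp ((t : ℂ) * x) ∂μ) = _
      have hfun : (fun x : ℝ => Complex.exp ((t : ℂ) * x))
          = fun x : ℝ => ((Real.exp (t * x) : ℝ) : ℂ) := by
        funext x
        rw [Complex.ofReal_exp, Complex.ofReal_mul]
      rw [hfun]
      exact integral_ofReal
    rw [this, Complex.ofReal_re]
  rwa [heq] at hre

lemma cumulant_contDiffAt (μ : Measure ℝ) [IsProbabilityMeasure μ] {θ : ℝ}
    (hθ : θ ∈ interior (laplaceDomain μ)) {n : WithTop ℕ∞} :
    ContDiffAt ℝ n (cumulant μ) θ := by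
  have han := analyticAt_integral_exp μ hθ
  have hL : ContDiffAt ℝ n (fun t : ℝ => ∫ x, Real.exp (t * x) ∂μ) θ := han.contDiffAt
  have hpos : 0 < ∫ x, Real.exp (θ * x) ∂μ := by
    have : NeZero μ := ⟨IsProbabilityMeasure.ne_zero μ⟩
    have hdom : θ ∈ laplaceDomain μ := interior_subset hθ
    exact integral_exp_pos hdom
  exact hL.log hpos.ne'

lemma iterAdd {M : Set ℝ} (hUD : UniqueDiffOn ℝ M) {a : ℝ} (ha : a ∈ M) {n : ℕ}
    {p q : ℝ → ℝ} (hp : ContDiffOn ℝ n p M) (hq : ContDiffOn ℝ n q M) :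
    iteratedDerivWithin n (fun m => p m + q m) M a
      = iteratedDerivWithin n p M a + iteratedDerivWithin n q M a :=
  iteratedDerivWithin_add ha hUD (hp a ha) (hq a ha)

/-- Iterated derivative of `(m - c) * g m` within an open set. -/
lemma keyA {M : Set ℝ} (hM : IsOpen M) (c : ℝ) :
    ∀ (n : ℕ) (g : ℝ → ℝ), (∀ k : ℕ, ContDiffOn ℝ k g M) → ∀ a ∈ M,
      iteratedDerivWithin n (fun m => (m - c) * g m) M a
        = (a - c) * iteratedDerivWithin n g M a
          + (n : ℝ) * iteratedDerivWithin (n - 1) g M a := by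
  intro n
  induction n with
  | zero => intro g hg a ha; simp
  | succ n IH =>
    intro g hg a ha
    have hUD : UniqueDiffOn ℝ M := hM.uniqueDiffOn
    have hg' : ∀ k : ℕ, ContDiffOn ℝ k (derivWithin g M) M := fun k =>
      (hg (k + 1)).derivWithin hUD (by exact_mod_cast le_rfl)
    have hgd : ∀ m ∈ M, DifferentiableAt ℝ g m := fun m hm =>
      ((hg 1).contDiffAt (hM.mem_nhds hm)).differentiableAt (by simp)
    have heq : Set.EqOn (derivWithin (fun m => (m - c) * g m) M)
        (fun m => g m + (m - c) * derivWithin g M m) M := by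
      intro m hm
      show derivWithin (fun m => (m - c) * g m) M m
        = g m + (m - c) * derivWithin g M m
      rw [derivWithin_of_isOpen hM hm, derivWithin_of_isOpen hM hm]
      have h1 : HasDerivAt (fun m => (m - c) * g m)
          (1 * g m + (m - c) * deriv g m) m :=
        ((hasDerivAt_id m).sub_const c).mul (hgd m hm).hasDerivAt
      rw [h1.deriv]; ring
    have hgn : ContDiffOn ℝ (n : ℕ∞) g M := hg n
    have hprod : ContDiffOn ℝ (n : ℕ∞) (fun m => (m - c) * derivWithin g M m) M :=
      ((contDiffOn_id.sub contDiffOn_const)).mul (hg' n)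
    rw [iteratedDerivWithin_succ',
      iteratedDerivWithin_congr heq ha]
    rw [iterAdd hUD ha hgn hprod]
    rw [IH (derivWithin g M) hg' a ha]
    have hshift : ∀ j : ℕ, iteratedDerivWithin j (derivWithin g M) M a
        = iteratedDerivWithin (j + 1) g M a := fun j =>
      (congrFun iteratedDerivWithin_succ' a).symm
    have hlast : (n : ℝ) * iteratedDerivWithin (n - 1) (derivWithin g M) M a
        = (n : ℝ) * iteratedDerivWithin n g M a := by
      cases n with
      | zero => simp
      | succ m => rw [hshift]; norm_num
    rw [hshift, hlast]
    push_cast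
    ring

/-- If the variance function is cubic,
`V_F(m) = a₃(m−m₀)³ + a₂(m−m₀)² + a₁(m−m₀) + a₀`, then the Feinsilver polynomials
satisfy the four-term recurrence
`x P_n = a₃ n(n−1)(n−2) P_{n−2} + n(a₂(n−1)+1) P_{n−1} + (n a₁ + m₀) P_n + a₀ P_{n+1}`
for all `n ≥ 2`. -/
theorem feinsilver_four_term_recurrence (μ : Measure ℝ) [IsProbabilityMeasure μ]
    (hμpt : ∀ c : ℝ, μ {c}ᶜ ≠ 0)
    (ψ : ℝ → ℝ) (M : Set ℝ) (hM : IsOpen M)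
    (hmem : ∀ m ∈ M, ψ m ∈ interior (laplaceDomain μ))
    (hinv : ∀ m ∈ M, deriv (cumulant μ) (ψ m) = m)
    (hψ : ContDiffOn ℝ (⊤ : ℕ∞) ψ M)
    (m₀ : ℝ) (hm₀ : m₀ ∈ M) (hψ₀ : ψ m₀ = 0)
    (a₀ a₁ a₂ a₃ : ℝ)
    (hcubic : ∀ m ∈ M, deriv (deriv (cumulant μ)) (ψ m)
      = a₃ * (m - m₀) ^ 3 + a₂ * (m - m₀) ^ 2 + a₁ * (m - m₀) + a₀) :
    ∀ n : ℕ, 2 ≤ n → ∀ x : ℝ,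
      x * iteratedDerivWithin n (fun m' => nefDensity μ ψ x m') M m₀
        = a₃ * (n * (n - 1) * (n - 2) : ℝ)
            * iteratedDerivWithin (n - 2) (fun m' => nefDensity μ ψ x m') M m₀
          + (n : ℝ) * (a₂ * ((n : ℝ) - 1) + 1)
            * iteratedDerivWithin (n - 1) (fun m' => nefDensity μ ψ x m') M m₀
          + ((n : ℝ) * a₁ + m₀)
            * iteratedDerivWithin n (fun m' => nefDensity μ ψ x m') M m₀
          + a₀ * iteratedDerivWithin (n + 1) (fun m' => nefDensity μ ψ x m') M m₀ := by
  intro n hn x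
  have hUD : UniqueDiffOn ℝ M := hM.uniqueDiffOn
  set K : ℝ → ℝ := deriv (cumulant μ) with hKdef
  set f : ℝ → ℝ := fun m' => nefDensity μ ψ x m' with hfdef
  -- smoothness of ψ and cumulant
  have hψat : ∀ m ∈ M, ∀ k : ℕ, ContDiffAt ℝ k ψ m := fun m hm k =>
    (hψ.contDiffAt (hM.mem_nhds hm)).of_le (mod_cast le_top)
  have hKat : ∀ m ∈ M, ∀ kk : ℕ, ContDiffAt ℝ kk (cumulant μ) (ψ m) := fun m hm kk =>
    cumulant_contDiffAt μ (hmem m hm)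
  have hf_sm : ∀ k : ℕ, ContDiffOn ℝ k f M := by
    intro k m hm
    apply ContDiffAt.contDiffWithinAt
    have h1 : ContDiffAt ℝ k (fun m' => ψ m' * x - cumulant μ (ψ m')) m :=
      ((hψat m hm k).mul contDiffAt_const).sub ((hKat m hm k).comp m (hψat m hm k))
    have h2 : ContDiffAt ℝ k
        (fun m' => Real.exp (ψ m' * x - cumulant μ (ψ m'))) m :=
      Real.contDiff_exp.contDiffAt.comp m h1
    exact h2
  -- the ODE satisfied by f on M
  have hODE : Set.EqOn
      (fun m => (a₃ * (m - m₀) ^ 3 + a₂ * (m - m₀) ^ 2 + a₁ * (m - m₀) + a₀)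
        * derivWithin f M m)
      (fun m => (x - m₀) * f m + (-1 : ℝ) * ((m - m₀) * f m)) M := by
    intro m hm
    have hdψ : HasDerivAt ψ (deriv ψ m) m :=
      (((hψat m hm 1)).differentiableAt (by simp)).hasDerivAt
    have hK1 : HasDerivAt (cumulant μ) m (ψ m) := by
      have h := (((hKat m hm 1)).differentiableAt
        (by simp)).hasDerivAt
      rwa [show deriv (cumulant μ) (ψ m) = m from hinv m hm] at h
    -- second derivative: deriv (cumulant μ) is differentiable at ψ m
    have hK2 : HasDerivAt (deriv (cumulant μ))
        (deriv (deriv (cumulant μ)) (ψ m)) (ψ m) := by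
      obtain ⟨u, hu, hKu⟩ := (hKat m hm 2).contDiffOn (le_refl _) (by simp)
      have hmemu : ψ m ∈ interior u := mem_interior_iff_mem_nhds.2 hu
      have h1 : ContDiffOn ℝ 1 (deriv (cumulant μ)) (interior u) :=
        (hKu.mono interior_subset).deriv_of_isOpen isOpen_interior
          (by exact_mod_cast le_rfl)
      exact (((h1.contDiffAt (isOpen_interior.mem_nhds hmemu)).differentiableAt
        one_ne_zero)).hasDerivAt
    have hchain : deriv (deriv (cumulant μ)) (ψ m) * deriv ψ m = 1 := by
      have hcomp : HasDerivAt (fun m' => deriv (cumulant μ) (ψ m'))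
          (deriv (deriv (cumulant μ)) (ψ m) * deriv ψ m) m := hK2.comp m hdψ
      have hEv : (fun m' => deriv (cumulant μ) (ψ m')) =ᶠ[nhds m] fun m' => m' :=
        Filter.eventuallyEq_of_mem (hM.mem_nhds hm) fun m' hm' => hinv m' hm'
      have hid : HasDerivAt (fun m' : ℝ => m')
          (deriv (deriv (cumulant μ)) (ψ m) * deriv ψ m) m :=
        hcomp.congr_of_eventuallyEq hEv.symm
      exact hid.unique (hasDerivAt_id m)
    have hfm : HasDerivAt f (f m * (deriv ψ m * x - m * deriv ψ m)) m := by
      have hin : HasDerivAt (fun m' => ψ m' * x - cumulant μ (ψ m'))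
          (deriv ψ m * x - m * deriv ψ m) m :=
        (hdψ.mul_const x).sub (hK1.comp m hdψ)
      have h := hin.exp
      simpa [hfdef, nefDensity] using h
    have hdw : derivWithin f M m = f m * (deriv ψ m * x - m * deriv ψ m) := by
      rw [derivWithin_of_isOpen hM hm]; exact hfm.deriv
    have hVψ : (a₃ * (m - m₀) ^ 3 + a₂ * (m - m₀) ^ 2 + a₁ * (m - m₀) + a₀)
        * deriv ψ m = 1 := by
      rw [← hcubic m hm]; exact hchain
    show (a₃ * (m - m₀) ^ 3 + a₂ * (m - m₀) ^ 2 + a₁ * (m - m₀) + a₀)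
        * derivWithin f M m
      = (x - m₀) * f m + (-1 : ℝ) * ((m - m₀) * f m)
    rw [hdw]
    have hrw : (a₃ * (m - m₀) ^ 3 + a₂ * (m - m₀) ^ 2 + a₁ * (m - m₀) + a₀)
          * (f m * (deriv ψ m * x - m * deriv ψ m))
        = ((a₃ * (m - m₀) ^ 3 + a₂ * (m - m₀) ^ 2 + a₁ * (m - m₀) + a₀)
          * deriv ψ m) * ((x - m) * f m) := by ring
    rw [hrw, hVψ, one_mul]
    ring
  -- abbreviations
  set g : ℝ → ℝ := derivWithin f M with hgdef
  have hg_sm : ∀ k : ℕ, ContDiffOn ℝ k g M := fun k =>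
    (hf_sm (k + 1)).derivWithin hUD (by exact_mod_cast le_rfl)
  obtain ⟨k, rfl⟩ : ∃ k, n = k + 2 := ⟨n - 2, by omega⟩
  have hP : ∀ j : ℕ, iteratedDerivWithin j g M m₀
      = iteratedDerivWithin (j + 1) f M m₀ := fun j =>
    (congrFun iteratedDerivWithin_succ' m₀).symm
  -- helper functions
  set h1 : ℝ → ℝ := fun m => (m - m₀) * g m with h1def
  set h2 : ℝ → ℝ := fun m => (m - m₀) * h1 m with h2def
  set h3 : ℝ → ℝ := fun m => (m - m₀) * h2 m with h3def
  have hpoly : ∀ k : ℕ, ContDiffOn ℝ k (fun m : ℝ => m - m₀) M := fun k =>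
    contDiffOn_id.sub contDiffOn_const
  have sm1 : ∀ k : ℕ, ContDiffOn ℝ k h1 M := fun k => (hpoly k).mul (hg_sm k)
  have sm2 : ∀ k : ℕ, ContDiffOn ℝ k h2 M := fun k => (hpoly k).mul (sm1 k)
  have sm3 : ∀ k : ℕ, ContDiffOn ℝ k h3 M := fun k => (hpoly k).mul (sm2 k)
  have hmain := iteratedDerivWithin_congr hODE hm₀ (n := k + 2)
  -- expand the LHS function
  have hLfun : (fun m => (a₃ * (m - m₀) ^ 3 + a₂ * (m - m₀) ^ 2 + a₁ * (m - m₀) + a₀)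
        * derivWithin f M m)
      = fun m => a₃ * h3 m + (a₂ * h2 m + (a₁ * h1 m + a₀ * g m)) := by
    funext m
    simp only [h3def, h2def, h1def, hgdef]
    ring
  rw [hLfun] at hmain
  have c3 : ContDiffOn ℝ (k + 2 : ℕ) (fun m => a₃ * h3 m) M :=
    contDiffOn_const.mul (sm3 (k + 2))
  have c2 : ContDiffOn ℝ (k + 2 : ℕ) (fun m => a₂ * h2 m) M :=
    contDiffOn_const.mul (sm2 (k + 2))
  have c1 : ContDiffOn ℝ (k + 2 : ℕ) (fun m => a₁ * h1 m) M :=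
    contDiffOn_const.mul (sm1 (k + 2))
  have c0 : ContDiffOn ℝ (k + 2 : ℕ) (fun m => a₀ * g m) M :=
    contDiffOn_const.mul (hg_sm (k + 2))
  rw [iterAdd hUD hm₀ c3 (c2.add (c1.add c0)),
    iterAdd hUD hm₀ c2 (c1.add c0),
    iterAdd hUD hm₀ c1 c0,
    iteratedDerivWithin_const_mul hm₀ hUD a₃ (sm3 (k + 2) m₀ hm₀),
    iteratedDerivWithin_const_mul hm₀ hUD a₂ (sm2 (k + 2) m₀ hm₀),
    iteratedDerivWithin_const_mul hm₀ hUD a₁ (sm1 (k + 2) m₀ hm₀),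
    iteratedDerivWithin_const_mul hm₀ hUD a₀ (hg_sm (k + 2) m₀ hm₀)] at hmain
  -- expand the RHS function
  have cR1 : ContDiffOn ℝ (k + 2 : ℕ) (fun m : ℝ => (x - m₀) * f m) M :=
    contDiffOn_const.mul (hf_sm (k + 2))
  have cR2 : ContDiffOn ℝ (k + 2 : ℕ) (fun m : ℝ => (-1 : ℝ) * ((m - m₀) * f m)) M :=
    contDiffOn_const.mul ((hpoly (k + 2)).mul (hf_sm (k + 2)))
  rw [iterAdd hUD hm₀ cR1 cR2,
    iteratedDerivWithin_const_mul hm₀ hUD (x - m₀) (hf_sm (k + 2) m₀ hm₀),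
    iteratedDerivWithin_const_mul hm₀ hUD (-1 : ℝ) (((hpoly (k + 2)).mul (hf_sm (k + 2))) m₀ hm₀)]
      at hmain
  -- now evaluate all the pieces with keyA
  have E3 : iteratedDerivWithin (k + 2) h3 M m₀
      = ((k : ℝ) + 2) * (((k : ℝ) + 1) * ((k : ℝ)
        * iteratedDerivWithin k f M m₀)) := by
    rw [show h3 = fun m => (m - m₀) * h2 m from rfl,
      keyA hM m₀ (k + 2) h2 sm2 m₀ hm₀,
      show k + 2 - 1 = k + 1 from rfl]
    rw [show h2 = fun m => (m - m₀) * h1 m from rfl,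
      keyA hM m₀ (k + 1) h1 sm1 m₀ hm₀,
      show k + 1 - 1 = k from rfl]
    rw [show h1 = fun m => (m - m₀) * g m from rfl,
      keyA hM m₀ k g hg_sm m₀ hm₀]
    have hk : (k : ℝ) * iteratedDerivWithin (k - 1) g M m₀
        = (k : ℝ) * iteratedDerivWithin k f M m₀ := by
      cases k with
      | zero => simp
      | succ j =>
        rw [show j + 1 - 1 = j from rfl, hP j]
    rw [hk]
    push_cast
    ring
  have E2 : iteratedDerivWithin (k + 2) h2 M m₀
      = ((k : ℝ) + 2) * (((k : ℝ) + 1) * iteratedDerivWithin (k + 1) f M m₀) := by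
    rw [show h2 = fun m => (m - m₀) * h1 m from rfl,
      keyA hM m₀ (k + 2) h1 sm1 m₀ hm₀,
      show k + 2 - 1 = k + 1 from rfl]
    rw [show h1 = fun m => (m - m₀) * g m from rfl,
      keyA hM m₀ (k + 1) g hg_sm m₀ hm₀,
      show k + 1 - 1 = k from rfl, hP k]
    push_cast
    ring
  have E1 : iteratedDerivWithin (k + 2) h1 M m₀
      = ((k : ℝ) + 2) * iteratedDerivWithin (k + 2) f M m₀ := by
    rw [show h1 = fun m => (m - m₀) * g m from rfl,
      keyA hM m₀ (k + 2) g hg_sm m₀ hm₀,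
      show k + 2 - 1 = k + 1 from rfl, hP (k + 1)]
    push_cast
    ring
  have E0 : iteratedDerivWithin (k + 2) g M m₀
      = iteratedDerivWithin (k + 3) f M m₀ := hP (k + 2)
  have ER : iteratedDerivWithin (k + 2) (fun m : ℝ => (m - m₀) * f m) M m₀
      = ((k : ℝ) + 2) * iteratedDerivWithin (k + 1) f M m₀ := by
    rw [keyA hM m₀ (k + 2) f hf_sm m₀ hm₀,
      show k + 2 - 1 = k + 1 from rfl]
    push_cast
    ring
  rw [E3, E2, E1, E0, ER] at hmain
  -- finish with algebra
  have hidx2 : k + 2 - 2 = k := by omega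
  have hidx1 : k + 2 - 1 = k + 1 := by omega
  rw [hidx2, hidx1, show k + 2 + 1 = k + 3 from rfl]
  push_cast at hmain ⊢
  set P0 := iteratedDerivWithin k f M m₀ with hP0
  set P1 := iteratedDerivWithin (k + 1) f M m₀ with hP1
  set P2 := iteratedDerivWithin (k + 2) f M m₀ with hP2
  set P3 := iteratedDerivWithin (k + 3) f M m₀ with hP3
  linear_combination -hmain
end

section
/- Let μ ∈ M(ℝ) with 0 ∈ Θ(μ), let α > 0 with [−α, α] ⊂ Θ(μ), and let z ↦ ψ₁(z), k₁ be analytic extensions of ψ_μ, k_μ to complex domains such that ψ₁ maps a disk D(m₀, r) into D(0, α/3). Then the map z ↦ f₁(·, z) = exp(ψ₁(z)·x − k₁(ψ₁(z))) from D(m₀, r) into L²(μ) is well defined (each f₁(·,z) is square-integrable) and complex differentiable, hence analytic. -/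
/-!
Write `f₁(·, z) = exp (-k₁ (ψ₁ z)) • e (ψ₁ z)` with `e w = (x ↦ exp (w x))`. Since `ψ₁` takes
values in the strip `2 |Re w| < α`, it suffices that `e` is complex differentiable into `L²(μ)`
there, with derivative `x ↦ x exp (w₀ x)` at `w₀`. The Taylor remainder
`e w - e w₀ - (w - w₀) x e w₀` is bounded pointwise by
`|w - w₀|² x² exp (Re w₀ x + |w - w₀| |x|)`, and for `|w - w₀|` small this majorant is
square-integrable by the exponential moment hypothesis, so the remainder is `O(|w - w₀|²)` in `L²`.
-/

open MeasureTheory Complex Metric Filter Topology Asymptotics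

section LpDerivative

variable {𝕜 α E : Type*} [NontriviallyNormedField 𝕜] [NormedAddCommGroup E] [NormedSpace 𝕜 E]
  {m : MeasurableSpace α} {μ : Measure α} {p : ENNReal} [Fact (1 ≤ p)]

theorem hasDerivAt_Lp_of_norm_sub_le_sq {F : 𝕜 → Lp E p μ} {f : 𝕜 → α → E} {d : α → E}
    {g : α → ℝ} {w₀ : 𝕜} (hF : ∀ᶠ w in 𝓝 w₀, F w =ᵐ[μ] f w) (hd : MemLp d p μ)
    (hg : MemLp g p μ)
    (hbound : ∀ᶠ w in 𝓝 w₀, ∀ᵐ x ∂μ, ‖f w x - f w₀ x - (w - w₀) • d x‖ ≤ ‖w - w₀‖ ^ 2 * g x) :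
    HasDerivAt F (hd.toLp d) w₀ := by
  refine hasDerivAt_iff_isLittleO.2
    (IsBigO.trans_isLittleO ?_ (isLittleO_pow_sub_sub w₀ one_lt_two))
  refine IsBigO.of_bound ‖hg.toLp g‖ ?_
  filter_upwards [hF, hbound] with w hFw hw
  have hnorm : ‖(‖w - w₀‖ ^ 2 : ℝ) • hg.toLp g‖ = ‖hg.toLp g‖ * ‖‖w - w₀‖ ^ 2‖ := by
    rw [norm_smul, mul_comm]
  refine (Lp.norm_le_norm_of_ae_le ?_).trans hnorm.le
  filter_upwards [hw, hFw, hF.self_of_nhds, hd.coeFn_toLp, hg.coeFn_toLp,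
    Lp.coeFn_sub (F w - F w₀) ((w - w₀) • hd.toLp d), Lp.coeFn_sub (F w) (F w₀),
    Lp.coeFn_smul (w - w₀) (hd.toLp d), Lp.coeFn_smul (‖w - w₀‖ ^ 2 : ℝ) (hg.toLp g)]
    with x hx hFw hFw₀ hdx hgx hsub hsub' hsmul hsmul'
  simp only [hsub, hsub', hsmul, hsmul', Pi.sub_apply, Pi.smul_apply, hFw, hFw₀, hdx, hgx,
    smul_eq_mul]
  exact hx.trans (Real.le_norm_self _)

end LpDerivative

section ExpL2

variable {μ : Measure ℝ} {α : ℝ}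

theorem integrable_abs_pow_mul_exp_add_mul_abs
    (hint : ∀ θ : ℝ, |θ| ≤ α → Integrable (fun x => Real.exp (θ * x)) μ)
    (n : ℕ) {c γ : ℝ} (hγ : 0 ≤ γ) (hcγ : |c| + γ < α) :
    Integrable (fun x : ℝ => |x| ^ n * Real.exp (c * x + γ * |x|)) μ := by
  set t := α - |c| with ht
  have hpos : |c + t| ≤ α := by
    rw [abs_le]; constructor <;> linarith [neg_abs_le c, le_abs_self c]
  have hneg : |c - t| ≤ α := by
    rw [abs_le]; constructor <;> linarith [neg_abs_le c, le_abs_self c]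
  have hγt : γ < |t| := by rw [abs_of_nonneg (by linarith)]; linarith
  exact ProbabilityTheory.integrable_pow_abs_mul_exp_add_of_integrable_exp_mul (X := id)
    (hint _ hpos) (hint _ hneg) hγ hγt n

theorem memLp_two_abs_pow_mul_exp_add_mul_abs
    (hint : ∀ θ : ℝ, |θ| ≤ α → Integrable (fun x => Real.exp (θ * x)) μ)
    (n : ℕ) {c γ : ℝ} (hγ : 0 ≤ γ) (hcγ : 2 * (|c| + γ) < α) :
    MemLp (fun x : ℝ => |x| ^ n * Real.exp (c * x + γ * |x|)) 2 μ := by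
  refine (memLp_two_iff_integrable_sq_norm (by fun_prop)).2 ?_
  have hsq : ∀ x : ℝ, ‖|x| ^ n * Real.exp (c * x + γ * |x|)‖ ^ 2
      = |x| ^ (2 * n) * Real.exp ((2 * c) * x + (2 * γ) * |x|) := by
    intro x
    rw [Real.norm_of_nonneg (by positivity), mul_pow, ← pow_mul, mul_comm n, ← Real.exp_nat_mul]
    push_cast; ring_nf
  simp_rw [hsq]
  exact integrable_abs_pow_mul_exp_add_mul_abs hint (2 * n) (by positivity)
    (by rw [abs_mul, abs_two]; linarith)

theorem norm_cexp_mul_ofReal (w : ℂ) (x : ℝ) : ‖cexp (w * x)‖ = Real.exp (w.re * x) := by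
  rw [Complex.norm_exp, re_mul_ofReal]

theorem norm_cexp_mul_sub_cexp_mul_sub_le (w w₀ : ℂ) (x : ℝ) :
    ‖cexp (w * x) - cexp (w₀ * x) - (w - w₀) • ((x : ℂ) * cexp (w₀ * x))‖
      ≤ ‖w - w₀‖ ^ 2 * (|x| ^ 2 * Real.exp (w₀.re * x + ‖w - w₀‖ * |x|)) := by
  have hfactor : cexp (w * x) - cexp (w₀ * x) - (w - w₀) • ((x : ℂ) * cexp (w₀ * x))
      = cexp (w₀ * x) * (cexp ((w - w₀) * x) - ∑ m ∈ Finset.range 2,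
          ((w - w₀) * x) ^ m / m.factorial) := by
    rw [show w * (x : ℂ) = w₀ * x + (w - w₀) * x by ring, Complex.exp_add]
    simp only [smul_eq_mul, Finset.sum_range_succ, Finset.range_one, Finset.sum_singleton,
      pow_zero, pow_one, Nat.factorial_zero, Nat.factorial_one, Nat.cast_one, div_one]
    ring
  have hnorm : ‖(w - w₀) * (x : ℂ)‖ = ‖w - w₀‖ * |x| := by
    rw [norm_mul, Complex.norm_real, Real.norm_eq_abs]
  rw [hfactor, norm_mul, norm_cexp_mul_ofReal]
  calc Real.exp (w₀.re * x) * ‖cexp ((w - w₀) * x) - ∑ m ∈ Finset.range 2,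
          ((w - w₀) * x) ^ m / m.factorial‖
      ≤ Real.exp (w₀.re * x) * (‖(w - w₀) * (x : ℂ)‖ ^ 2 * Real.exp ‖(w - w₀) * (x : ℂ)‖) := by
        gcongr; exact Complex.norm_exp_sub_sum_le_norm_mul_exp _ 2
    _ = _ := by rw [hnorm, Real.exp_add]; ring

theorem memLp_cexp_mul (hint : ∀ θ : ℝ, |θ| ≤ α → Integrable (fun x => Real.exp (θ * x)) μ)
    {w : ℂ} (hw : 2 * |w.re| < α) :
    MemLp (fun x : ℝ => cexp (w * x)) 2 μ :=
  (memLp_two_abs_pow_mul_exp_add_mul_abs hint 0 le_rfl (by simpa using hw)).of_le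
    (by fun_prop) (ae_of_all _ fun x => by simp [norm_cexp_mul_ofReal])

theorem memLp_ofReal_mul_cexp_mul
    (hint : ∀ θ : ℝ, |θ| ≤ α → Integrable (fun x => Real.exp (θ * x)) μ)
    {w : ℂ} (hw : 2 * |w.re| < α) :
    MemLp (fun x : ℝ => (x : ℂ) * cexp (w * x)) 2 μ :=
  (memLp_two_abs_pow_mul_exp_add_mul_abs hint 1 le_rfl (by simpa using hw)).of_le
    (by fun_prop) (ae_of_all _ fun x => by simp [norm_cexp_mul_ofReal])

variable (μ) in
open Classical in
/-- `w ↦ (x ↦ exp (w x))` as a map into `L²(μ)`, with junk value `0` where it is not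
square-integrable. -/
noncomputable def expL2 (w : ℂ) : Lp ℂ 2 μ :=
  if h : MemLp (fun x : ℝ => cexp (w * x)) 2 μ then h.toLp _ else 0

theorem expL2_ae_eq {w : ℂ} (hw : MemLp (fun x : ℝ => cexp (w * x)) 2 μ) :
    expL2 μ w =ᵐ[μ] fun x : ℝ => cexp (w * x) := by
  rw [expL2, dif_pos hw]
  exact hw.coeFn_toLp

theorem hasDerivAt_expL2 (hint : ∀ θ : ℝ, |θ| ≤ α → Integrable (fun x => Real.exp (θ * x)) μ)
    {w₀ : ℂ} (hw₀ : 2 * |w₀.re| < α) :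
    HasDerivAt (expL2 μ) ((memLp_ofReal_mul_cexp_mul hint hw₀).toLp _) w₀ := by
  set δ := (α - 2 * |w₀.re|) / 4 with hδ
  have hδ_pos : 0 < δ := by linarith
  have hnear : ∀ᶠ w in 𝓝 w₀, ‖w - w₀‖ < δ := by
    filter_upwards [ball_mem_nhds w₀ hδ_pos] with w hw using mem_ball_iff_norm.1 hw
  refine hasDerivAt_Lp_of_norm_sub_le_sq (f := fun w (x : ℝ) => cexp (w * x))
    (g := fun x : ℝ => |x| ^ 2 * Real.exp (w₀.re * x + δ * |x|))
    (hnear.mono fun w hw => expL2_ae_eq (memLp_cexp_mul hint ?_)) _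
    (memLp_two_abs_pow_mul_exp_add_mul_abs hint 2 hδ_pos.le (c := w₀.re) (by linarith))
    (hnear.mono fun w hw => ae_of_all _ fun x => ?_)
  · have hre : |w.re| ≤ |w₀.re| + ‖w - w₀‖ :=
      calc |w.re| = |w₀.re + (w - w₀).re| := by rw [sub_re, add_sub_cancel]
        _ ≤ |w₀.re| + |(w - w₀).re| := abs_add_le _ _
        _ ≤ |w₀.re| + ‖w - w₀‖ := by gcongr; exact abs_re_le_norm _
    linarith
  · refine (norm_cexp_mul_sub_cexp_mul_sub_le w w₀ x).trans ?_
    gcongr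

end ExpL2

theorem nefDensity_analytic_into_L2_general (μ : Measure ℝ)
    (α : ℝ)
    (hint : ∀ θ : ℝ, |θ| ≤ α → Integrable (fun x => Real.exp (θ * x)) μ)
    (m₀ : ℂ) (r : ℝ)
    (ψ₁ k₁ : ℂ → ℂ)
    (hψ₁ : DifferentiableOn ℂ ψ₁ (ball m₀ r))
    (hk₁ : DifferentiableOn ℂ k₁ (ball 0 (α / 3)))
    (hmap : Set.MapsTo ψ₁ (ball m₀ r) (ball 0 (α / 3))) :
    (∀ z ∈ ball m₀ r,
      MemLp (fun x : ℝ => Complex.exp (ψ₁ z * x - k₁ (ψ₁ z))) 2 μ)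
    ∧ ∃ φ : ℂ → Lp ℂ 2 μ,
        (∀ z ∈ ball m₀ r,
          (φ z : ℝ → ℂ) =ᵐ[μ] fun x : ℝ => Complex.exp (ψ₁ z * x - k₁ (ψ₁ z)))
        ∧ DifferentiableOn ℂ φ (ball m₀ r) := by
  have hre : ∀ z ∈ ball m₀ r, 2 * |(ψ₁ z).re| < α := fun z hz => by
    have hψz := mem_ball_zero_iff.1 (hmap hz)
    linarith [abs_re_le_norm (ψ₁ z), norm_nonneg (ψ₁ z)]
  set φ : ℂ → Lp ℂ 2 μ := fun z => cexp (-k₁ (ψ₁ z)) • expL2 μ (ψ₁ z)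
  have hφ : ∀ z ∈ ball m₀ r,
      (φ z : ℝ → ℂ) =ᵐ[μ] fun x : ℝ => cexp (ψ₁ z * x - k₁ (ψ₁ z)) := fun z hz => by
    filter_upwards [Lp.coeFn_smul (cexp (-k₁ (ψ₁ z))) (expL2 μ (ψ₁ z)),
      expL2_ae_eq (memLp_cexp_mul hint (hre z hz))] with x hsmul hexp
    rw [hsmul, Pi.smul_apply, hexp, smul_eq_mul, ← Complex.exp_add, neg_add_eq_sub]
  refine ⟨fun z hz => (Lp.memLp (φ z)).ae_eq (hφ z hz), φ, hφ, fun z hz => ?_⟩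
  have hψz := hψ₁.differentiableAt (isOpen_ball.mem_nhds hz)
  have hkz := hk₁.differentiableAt (isOpen_ball.mem_nhds (hmap hz))
  exact (((hkz.comp z hψz).neg.cexp).smul
    ((hasDerivAt_expL2 hint (hre z hz)).differentiableAt.comp z hψz)).differentiableWithinAt

/-- Section 5: if `μ` has finite Laplace transform on `[−α, α]` and `ψ₁`, `k₁` are
analytic extensions with `ψ₁` mapping the disk `D(m₀,r)` into `D(0, α/3)`, then
`z ↦ f₁(·,z) = exp(ψ₁(z)·x − k₁(ψ₁(z)))` is a well-defined and complex differentiable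
(hence analytic) map from `D(m₀,r)` into `L²(μ)`. -/
theorem nefDensity_analytic_into_L2 (μ : Measure ℝ) [IsProbabilityMeasure μ]
    (α : ℝ) (hα : 0 < α)
    (hint : ∀ θ : ℝ, |θ| ≤ α → Integrable (fun x => Real.exp (θ * x)) μ)
    (m₀ : ℂ) (r : ℝ) (hr : 0 < r)
    (ψ₁ k₁ : ℂ → ℂ)
    (hψ₁ : DifferentiableOn ℂ ψ₁ (ball m₀ r))
    (hk₁ : DifferentiableOn ℂ k₁ (ball 0 (α / 3)))
    (hmap : Set.MapsTo ψ₁ (ball m₀ r) (ball 0 (α / 3))) :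
    (∀ z ∈ ball m₀ r,
      MemLp (fun x : ℝ => Complex.exp (ψ₁ z * x - k₁ (ψ₁ z))) 2 μ)
    ∧ ∃ φ : ℂ → Lp ℂ 2 μ,
        (∀ z ∈ ball m₀ r,
          (φ z : ℝ → ℂ) =ᵐ[μ] fun x : ℝ => Complex.exp (ψ₁ z * x - k₁ (ψ₁ z)))
        ∧ DifferentiableOn ℂ φ (ball m₀ r) :=
  nefDensity_analytic_into_L2_general μ α hint m₀ r ψ₁ k₁ hψ₁ hk₁ hmap
end
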